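/- arXiv:2008.05815 — 4 statements merged into one kernel-verified Lean document; each statement's English description precedes it below -/
import Mathlib

section
/- For fixed integers k, n with 1 < n/2 < k < n, as t → ∞ one has t^{k+1} ≪ |R_{k,n}(t)| ≪ t^{k+1}; that is, there exist positive constants c, C such that c · t^{k+1} ≤ |R_{k,n}(t)| ≤ C · t^{k+1} for all sufficiently large t. -/
open Polynomial

/-- The height of an integer polynomial: the maximum of the absolute values
of its coefficients. -/
def polyHeight (p : Polynomial ℤ) : ℕ :=
  p.support.sup fun i => (p.coeff i).natAbs

/-- `Rset n t` is the set of integer polynomials of degree exactly `n`,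
height at most `t`, which are reducible over `ℚ`. -/
def Rset (n : ℕ) (t : ℝ) : Set (Polynomial ℤ) :=
  {p | p.natDegree = n ∧ (polyHeight p : ℝ) ≤ t ∧
       ¬ Irreducible (p.map (Int.castRingHom ℚ))}

/-- `Rkn k n t` is the subset of `Rset n t` of polynomials having an
irreducible factor in `ℤ[X]` of degree exactly `k`. -/
def Rkn (k n : ℕ) (t : ℝ) : Set (Polynomial ℤ) :=
  {p ∈ Rset n t | ∃ g : Polynomial ℤ, Irreducible g ∧ g.natDegree = k ∧ g ∣ p}

lemma coeff_natAbs_le (p : Polynomial ℤ) (i : ℕ) : (p.coeff i).natAbs ≤ polyHeight p := by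
  by_cases h : i ∈ p.support
  · exact Finset.le_sup (f := fun i => (p.coeff i).natAbs) h
  · rw [Polynomial.notMem_support_iff.mp h]; simp

lemma exists_coeff_eq_height (p : Polynomial ℤ) (hp : p ≠ 0) :
    ∃ i ≤ p.natDegree, (p.coeff i).natAbs = polyHeight p := by
  obtain ⟨i, hi, heq⟩ := Finset.exists_mem_eq_sup p.support
    (Polynomial.nonempty_support_iff.mpr hp) (fun i => (p.coeff i).natAbs)
  exact ⟨i, Polynomial.le_natDegree_of_mem_supp i hi, heq.symm⟩

lemma one_le_polyHeight (p : Polynomial ℤ) (hp : p ≠ 0) : 1 ≤ polyHeight p := by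
  obtain ⟨i, _, h⟩ := exists_coeff_eq_height p hp
  rcases Nat.eq_zero_or_pos (polyHeight p) with h0 | h1
  · exfalso
    have : ∀ j, p.coeff j = 0 := by
      intro j
      have := coeff_natAbs_le p j
      rw [h0, Nat.le_zero, Int.natAbs_eq_zero] at this
      exact this
    exact hp (Polynomial.ext fun j => this j)
  · exact h1

lemma polyHeight_le_iff (p : Polynomial ℤ) (B : ℕ) :
    polyHeight p ≤ B ↔ ∀ i, (p.coeff i).natAbs ≤ B := by
  constructor
  · exact fun h i => le_trans (coeff_natAbs_le p i) h
  · intro h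
    apply Finset.sup_le
    exact fun i _ => h i
def box (d B : ℕ) : Set (Polynomial ℤ) := {q | q.natDegree ≤ d ∧ polyHeight q ≤ B}

lemma box_injOn (d : ℕ) : Set.InjOn (fun (q : Polynomial ℤ) (i : Fin (d+1)) => q.coeff i)
    {q | q.natDegree ≤ d} := by
  intro p hp q hq h
  apply Polynomial.ext
  intro j
  by_cases hj : j ≤ d
  · exact congrFun h ⟨j, Nat.lt_succ_of_le hj⟩
  · rw [Polynomial.coeff_eq_zero_of_natDegree_lt (lt_of_le_of_lt hp (Nat.lt_of_not_le hj)),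
      Polynomial.coeff_eq_zero_of_natDegree_lt (lt_of_le_of_lt hq (Nat.lt_of_not_le hj))]

lemma box_maps (d B : ℕ) : ∀ q ∈ box d B, (fun (i : Fin (d+1)) => q.coeff i) ∈
    (↑(Fintype.piFinset (fun _ : Fin (d+1) => Finset.Icc (-(B:ℤ)) B)) : Set (Fin (d+1) → ℤ)) := by
  intro q hq
  simp only [Finset.coe_sort_coe, Set.mem_setOf_eq, Finset.mem_coe, Fintype.mem_piFinset,
    Finset.mem_Icc]
  intro i
  have := le_trans (coeff_natAbs_le q i) hq.2
  omega

lemma box_finite (d B : ℕ) : (box d B).Finite := by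
  apply Set.Finite.of_finite_image (f := fun (q : Polynomial ℤ) (i : Fin (d+1)) => q.coeff i)
  · exact Set.Finite.subset (Finset.finite_toSet _) (Set.image_subset_iff.mpr (box_maps d B))
  · exact (box_injOn d).mono (fun q hq => hq.1)

lemma box_card (d B : ℕ) : (box d B).ncard ≤ (2*B+1)^(d+1) := by
  have h := Set.ncard_le_ncard_of_injOn (fun (q : Polynomial ℤ) (i : Fin (d+1)) => q.coeff i)
    (box_maps d B) ((box_injOn d).mono (fun q hq => hq.1)) (Set.toFinite _)
  rw [Set.ncard_coe_finset, Fintype.card_piFinset] at h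
  rw [Finset.prod_const, Finset.card_univ, Fintype.card_fin, Int.card_Icc] at h
  have e : ((B:ℤ) + 1 - (-(B:ℤ))).toNat = 2*B+1 := by omega
  rwa [e] at h
noncomputable def pol {k : ℕ} (a : Fin (k+1) → ℝ) : Polynomial ℝ :=
  ∑ i : Fin (k+1), C (a i) * X ^ (i : ℕ)

lemma pol_coeff {k : ℕ} (a : Fin (k+1) → ℝ) (j : ℕ) :
    (pol a).coeff j = if h : j < k+1 then a ⟨j, h⟩ else 0 := by
  rw [pol, Polynomial.finset_sum_coeff]
  simp only [Polynomial.coeff_C_mul, Polynomial.coeff_X_pow]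
  split
  · next h =>
    rw [Finset.sum_eq_single (⟨j, h⟩ : Fin (k+1))]
    · simp
    · intro b _ hb
      have : j ≠ (b : ℕ) := by
        intro he; exact hb (by simp [Fin.ext_iff, ← he])
      simp [this]
    · simp
  · next h =>
    apply Finset.sum_eq_zero
    intro i _
    have : j ≠ (i : ℕ) := by omega
    simp [this]

lemma pol_natDegree_le {k : ℕ} (a : Fin (k+1) → ℝ) : (pol a).natDegree ≤ k := by
  apply Polynomial.natDegree_sum_le_of_forall_le
  intro i _
  exact le_trans (Polynomial.natDegree_C_mul_le _ _) (by simp [Polynomial.natDegree_X_pow]; omega)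

lemma pol_eq_zero_iff {k : ℕ} (a : Fin (k+1) → ℝ) : pol a = 0 ↔ a = 0 := by
  constructor
  · intro h
    funext i
    have := pol_coeff a i
    rw [h] at this
    simpa [i.isLt] using this.symm
  · intro h; rw [h]
    apply Finset.sum_eq_zero; simp

lemma pol_smul {k : ℕ} (s : ℝ) (a : Fin (k+1) → ℝ) : pol (s • a) = C s * pol a := by
  rw [pol, pol, Finset.mul_sum]
  apply Finset.sum_congr rfl
  intro i _
  simp [mul_assoc, C_mul]

noncomputable def Fvec (k m : ℕ) (ab : (Fin (k+1) → ℝ) × (Fin (m+1) → ℝ)) : Fin (k+m+1) → ℝ :=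
  fun j => (pol ab.1 * pol ab.2).coeff j

lemma Fvec_continuous (k m : ℕ) : Continuous (Fvec k m) := by
  apply continuous_pi
  intro j
  have : (fun ab : (Fin (k+1) → ℝ) × (Fin (m+1) → ℝ) => (pol ab.1 * pol ab.2).coeff j)
      = fun ab => ∑ x ∈ Finset.HasAntidiagonal.antidiagonal (j:ℕ),
        (if h : x.1 < k+1 then ab.1 ⟨x.1, h⟩ else 0) * (if h : x.2 < m+1 then ab.2 ⟨x.2, h⟩ else 0) := by
    funext ab
    rw [Polynomial.coeff_mul]
    apply Finset.sum_congr rfl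
    intro x _
    rw [pol_coeff, pol_coeff]
  unfold Fvec
  rw [this]
  apply continuous_finset_sum
  intro x _
  apply Continuous.mul
  · split
    · exact (continuous_apply _).comp continuous_fst
    · exact continuous_const
  · split
    · exact (continuous_apply _).comp continuous_snd
    · exact continuous_const

lemma Fvec_pos (k m : ℕ) (a : Fin (k+1) → ℝ) (b : Fin (m+1) → ℝ) (ha : a ≠ 0) (hb : b ≠ 0) :
    0 < ‖Fvec k m (a, b)‖ := by
  rw [norm_pos_iff]
  intro h
  have hprod : pol a * pol b ≠ 0 :=
    mul_ne_zero (fun hh => ha ((pol_eq_zero_iff a).mp hh)) (fun hh => hb ((pol_eq_zero_iff b).mp hh))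
  have hdeg : (pol a * pol b).natDegree ≤ k + m :=
    le_trans (Polynomial.natDegree_mul_le) (add_le_add (pol_natDegree_le a) (pol_natDegree_le b))
  have hlead : (pol a * pol b).coeff (pol a * pol b).natDegree ≠ 0 := by
    rw [← Polynomial.leadingCoeff]
    exact Polynomial.leadingCoeff_ne_zero.mpr hprod
  apply hlead
  have := congrFun h ⟨(pol a * pol b).natDegree, by omega⟩
  simpa [Fvec] using this

lemma gelfond_aux (k m : ℕ) : ∃ c : ℝ, 0 < c ∧ ∀ a : Fin (k+1) → ℝ, ∀ b : Fin (m+1) → ℝ,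
    c * ‖a‖ * ‖b‖ ≤ ‖Fvec k m (a, b)‖ := by
  have hcomp : IsCompact ((Metric.sphere (0 : Fin (k+1) → ℝ) 1) ×ˢ
      (Metric.sphere (0 : Fin (m+1) → ℝ) 1)) :=
    (isCompact_sphere _ _).prod (isCompact_sphere _ _)
  have hne : ((Metric.sphere (0 : Fin (k+1) → ℝ) 1) ×ˢ
      (Metric.sphere (0 : Fin (m+1) → ℝ) 1)).Nonempty :=
    Set.Nonempty.prod (NormedSpace.sphere_nonempty.mpr zero_le_one)
      (NormedSpace.sphere_nonempty.mpr zero_le_one)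
  obtain ⟨x₀, hx₀, hmin⟩ := hcomp.exists_isMinOn hne
    ((continuous_norm.comp (Fvec_continuous k m)).continuousOn)
  have hx1 : ‖x₀.1‖ = 1 := by simpa using (Set.mem_prod.mp hx₀).1
  have hx2 : ‖x₀.2‖ = 1 := by simpa using (Set.mem_prod.mp hx₀).2
  refine ⟨‖Fvec k m x₀‖, ?_, ?_⟩
  · have h1 : x₀.1 ≠ 0 := fun h => by simp [h] at hx1
    have h2 : x₀.2 ≠ 0 := fun h => by simp [h] at hx2
    simpa using Fvec_pos k m x₀.1 x₀.2 h1 h2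
  · intro a b
    by_cases ha : a = 0
    · simp [ha, norm_nonneg]
    by_cases hb : b = 0
    · simp [hb, norm_nonneg]
    have hna : 0 < ‖a‖ := norm_pos_iff.mpr ha
    have hnb : 0 < ‖b‖ := norm_pos_iff.mpr hb
    have hmem : ((‖a‖⁻¹ • a, ‖b‖⁻¹ • b) : (Fin (k+1) → ℝ) × (Fin (m+1) → ℝ)) ∈
        (Metric.sphere (0 : Fin (k+1) → ℝ) 1) ×ˢ (Metric.sphere (0 : Fin (m+1) → ℝ) 1) := by
      constructor <;> simp [norm_smul, abs_of_pos, inv_mul_cancel₀ hna.ne', inv_mul_cancel₀ hnb.ne',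
        abs_inv, abs_of_pos hna, abs_of_pos hnb]
    have hscale : Fvec k m (‖a‖⁻¹ • a, ‖b‖⁻¹ • b) = (‖a‖⁻¹ * ‖b‖⁻¹) • Fvec k m (a, b) := by
      funext j
      simp only [Fvec, pol_smul, Pi.smul_apply, smul_eq_mul]
      have hc : C ‖a‖⁻¹ * pol a * (C ‖b‖⁻¹ * pol b) = C (‖a‖⁻¹ * ‖b‖⁻¹) * (pol a * pol b) := by
        rw [C_mul]; ring
      rw [hc, Polynomial.coeff_C_mul]
    have hle : ‖Fvec k m x₀‖ ≤ ‖Fvec k m (‖a‖⁻¹ • a, ‖b‖⁻¹ • b)‖ := hmin hmem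
    rw [hscale, norm_smul] at hle
    have habs : |‖a‖⁻¹ * ‖b‖⁻¹| = ‖a‖⁻¹ * ‖b‖⁻¹ := abs_of_pos (by positivity)
    rw [Real.norm_eq_abs, habs] at hle
    have := mul_le_mul_of_nonneg_right hle (by positivity : (0:ℝ) ≤ ‖a‖ * ‖b‖)
    calc ‖Fvec k m x₀‖ * ‖a‖ * ‖b‖ = ‖Fvec k m x₀‖ * (‖a‖ * ‖b‖) := by ring
    _ ≤ ‖a‖⁻¹ * ‖b‖⁻¹ * ‖Fvec k m (a, b)‖ * (‖a‖ * ‖b‖) := this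
    _ = ‖Fvec k m (a, b)‖ := by field_simp



lemma gelfond_int (k m : ℕ) : ∃ c : ℝ, 0 < c ∧ ∀ g h : Polynomial ℤ, g ≠ 0 → h ≠ 0 →
    g.natDegree ≤ k → h.natDegree ≤ m →
    c * (polyHeight g : ℝ) * (polyHeight h : ℝ) ≤ (polyHeight (g * h) : ℝ) := by
  obtain ⟨c, hc, hineq⟩ := gelfond_aux k m
  refine ⟨c, hc, ?_⟩
  intro g h hg hh hdg hdh
  set a : Fin (k+1) → ℝ := fun i => ((g.coeff i : ℝ)) with ha
  set b : Fin (m+1) → ℝ := fun i => ((h.coeff i : ℝ)) with hb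
  have hga : ∀ j : ℕ, (pol a).coeff j = ((g.coeff j : ℝ)) := by
    intro j; rw [pol_coeff]; split
    · rfl
    · next hj => rw [Polynomial.coeff_eq_zero_of_natDegree_lt (by omega)]; simp
  have hhb : ∀ j : ℕ, (pol b).coeff j = ((h.coeff j : ℝ)) := by
    intro j; rw [pol_coeff]; split
    · rfl
    · next hj => rw [Polynomial.coeff_eq_zero_of_natDegree_lt (by omega)]; simp
  have hFv : ∀ j : Fin (k+m+1), Fvec k m (a, b) j = (((g*h).coeff j : ℝ)) := by
    intro j
    show (pol a * pol b).coeff j = _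
    rw [Polynomial.coeff_mul, Polynomial.coeff_mul]
    push_cast
    apply Finset.sum_congr rfl
    intro x _
    rw [hga, hhb]
  have h1 : (polyHeight g : ℝ) ≤ ‖a‖ := by
    obtain ⟨i, hi, he⟩ := exists_coeff_eq_height g hg
    have hik : i < k + 1 := by omega
    calc (polyHeight g : ℝ) = ‖a ⟨i, hik⟩‖ := by
          rw [← he]; simp only [ha]; rw [Real.norm_eq_abs, Nat.cast_natAbs, Int.cast_abs]
      _ ≤ ‖a‖ := norm_le_pi_norm a _
  have h2 : (polyHeight h : ℝ) ≤ ‖b‖ := by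
    obtain ⟨i, hi, he⟩ := exists_coeff_eq_height h hh
    have hik : i < m + 1 := by omega
    calc (polyHeight h : ℝ) = ‖b ⟨i, hik⟩‖ := by
          rw [← he]; simp only [hb]; rw [Real.norm_eq_abs, Nat.cast_natAbs, Int.cast_abs]
      _ ≤ ‖b‖ := norm_le_pi_norm b _
  have h3 : ‖Fvec k m (a, b)‖ ≤ (polyHeight (g * h) : ℝ) := by
    apply (pi_norm_le_iff_of_nonneg (by positivity)).mpr
    intro j
    rw [hFv j, Real.norm_eq_abs, ← Int.cast_abs, ← Nat.cast_natAbs]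
    exact_mod_cast coeff_natAbs_le (g*h) j
  calc c * (polyHeight g : ℝ) * (polyHeight h : ℝ) ≤ c * ‖a‖ * ‖b‖ := by
        apply mul_le_mul (mul_le_mul le_rfl h1 (by positivity) hc.le) h2 (by positivity) (by positivity)
    _ ≤ ‖Fvec k m (a, b)‖ := hineq a b
    _ ≤ _ := h3
lemma ncard_biUnion_le {α β : Type*} (s : Finset β) (f : β → Set α) (hf : ∀ b, (f b).Finite) :
    (⋃ b ∈ s, f b).ncard ≤ ∑ b ∈ s, (f b).ncard := by
  classical
  induction s using Finset.induction with
  | empty => simp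
  | insert _ _ hx ih =>
    next a s' =>
    rw [Finset.set_biUnion_insert, Finset.sum_insert hx]
    exact le_trans (Set.ncard_union_le _ _) (by omega)

lemma ncard_prod_le {α β : Type*} (s : Set α) (t : Set β) (hs : s.Finite) (ht : t.Finite) :
    (s ×ˢ t).ncard ≤ s.ncard * t.ncard := by
  classical
  have hsub : (s ×ˢ t) ⊆ ↑(hs.toFinset ×ˢ ht.toFinset) := by
    intro q hq
    simp only [Finset.coe_product, Set.mem_prod, Set.Finite.coe_toFinset]
    exact hq
  calc (s ×ˢ t).ncard ≤ (↑(hs.toFinset ×ˢ ht.toFinset) : Set (α × β)).ncard :=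
        Set.ncard_le_ncard hsub (Finset.finite_toSet _)
    _ = (hs.toFinset ×ˢ ht.toFinset).card := Set.ncard_coe_finset _
    _ = hs.toFinset.card * ht.toFinset.card := Finset.card_product _ _
    _ = s.ncard * t.ncard := by rw [Set.ncard_eq_toFinset_card s hs, Set.ncard_eq_toFinset_card t ht]
def Pairs (k m : ℕ) (t : ℝ) : Set (Polynomial ℤ × Polynomial ℤ) :=
  {q | q.1 ≠ 0 ∧ q.2 ≠ 0 ∧ q.1.natDegree ≤ k ∧ q.2.natDegree ≤ m ∧
    ((polyHeight (q.1 * q.2) : ℝ)) ≤ t}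

lemma pairs_card_le (k m : ℕ) (hmk : m < k) : ∃ C : ℝ, 0 < C ∧ ∀ t : ℝ, 1 ≤ t →
    ((Pairs k m t).ncard : ℝ) ≤ C * t ^ (k + 1) := by
  obtain ⟨c, hc, hgel⟩ := gelfond_int k m
  refine ⟨2 * 8^(m+1) * (3/c)^(k+1), by positivity, ?_⟩
  intro t ht
  have ht0 : 0 < t := lt_of_lt_of_le one_pos ht
  set U := ⌊t / c⌋₊ with hU
  -- basic bound inside Pairs
  have hqb : ∀ q ∈ Pairs k m t,
      c * (polyHeight q.1 : ℝ) * (polyHeight q.2 : ℝ) ≤ t := by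
    intro q hq
    exact le_trans (hgel q.1 q.2 hq.1 hq.2.1 hq.2.2.1 hq.2.2.2.1) hq.2.2.2.2
  have hone : ∀ q ∈ Pairs k m t, (1:ℝ) ≤ (polyHeight q.1 : ℝ) ∧ (1:ℝ) ≤ (polyHeight q.2 : ℝ) := by
    intro q hq
    constructor
    · exact_mod_cast one_le_polyHeight q.1 hq.1
    · exact_mod_cast one_le_polyHeight q.2 hq.2.1
  set piece := fun j : ℕ => Pairs k m t ∩ {q | 2^j ≤ polyHeight q.2 ∧ polyHeight q.2 < 2^(j+1)}
    with hpiece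
  have hpiece_sub : ∀ j, piece j ⊆ box k (⌊t/(c*2^j)⌋₊) ×ˢ box m (2^(j+1)) := by
    intro j q hq
    have hqP := hq.1
    have hlo := hq.2.1
    have hhi := hq.2.2
    have h1 := hqb q hqP
    have h2 := (hone q hqP).2
    have hlo' : (2:ℝ)^j ≤ (polyHeight q.2 : ℝ) := by exact_mod_cast hlo
    have hgle : (polyHeight q.1 : ℝ) ≤ t / (c * 2^j) := by
      rw [le_div_iff₀ (by positivity)]
      nlinarith [hqb q hqP, (hone q hqP).1, hc, pow_pos (by norm_num : (0:ℝ) < 2) j]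
    exact ⟨⟨hqP.2.2.1, Nat.le_floor hgle⟩, hqP.2.2.2.1, le_of_lt hhi⟩
  have hpiece_fin : ∀ j, (piece j).Finite :=
    fun j => Set.Finite.subset ((box_finite _ _).prod (box_finite _ _)) (hpiece_sub j)
  have hcover : Pairs k m t ⊆ ⋃ j ∈ Finset.range (U+1), piece j := by
    intro q hq
    have hu1 : 1 ≤ polyHeight q.2 := one_le_polyHeight q.2 hq.2.1
    have hj1 : 2^(Nat.log 2 (polyHeight q.2)) ≤ polyHeight q.2 := Nat.pow_log_le_self 2 (by omega)
    have hj2 : polyHeight q.2 < 2^(Nat.log 2 (polyHeight q.2) + 1) :=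
      Nat.lt_pow_succ_log_self (by norm_num) _
    have huU : polyHeight q.2 ≤ U := by
      apply Nat.le_floor
      rw [le_div_iff₀ hc]
      nlinarith [hqb q hq, (hone q hq).1, (hone q hq).2, hc]
    have hjmem : Nat.log 2 (polyHeight q.2) ∈ Finset.range (U+1) := by
      simp only [Finset.mem_range]
      have := Nat.log_le_self 2 (polyHeight q.2); omega
    exact Set.mem_biUnion hjmem ⟨hq, hj1, hj2⟩
  have hfinU : (⋃ j ∈ Finset.range (U+1), piece j).Finite :=
    Set.Finite.biUnion (Finset.range (U+1)).finite_toSet (fun j _ => hpiece_fin j)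
  have step1 : ((Pairs k m t).ncard : ℝ) ≤ ∑ j ∈ Finset.range (U+1), ((piece j).ncard : ℝ) := by
    have h1 := Set.ncard_le_ncard hcover hfinU
    have h2 := ncard_biUnion_le (Finset.range (U+1)) piece hpiece_fin
    have := le_trans h1 h2
    push_cast
    exact_mod_cast this
  have step2 : ∀ j, ((piece j).ncard : ℝ) ≤ 8^(m+1) * (3/c)^(k+1) * t^(k+1) * (1/2)^j := by
    intro j
    have hA : (0:ℝ) < 2^j := by positivity
    rcases le_or_gt 1 (t / (c * 2^j)) with hx | hx
    · have hcard : (piece j).ncard ≤ (2*⌊t/(c*2^j)⌋₊+1)^(k+1) * (2*(2^(j+1))+1)^(m+1) := by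
        calc (piece j).ncard ≤ (box k (⌊t/(c*2^j)⌋₊) ×ˢ box m (2^(j+1))).ncard :=
              Set.ncard_le_ncard (hpiece_sub j) ((box_finite _ _).prod (box_finite _ _))
          _ ≤ (box k _).ncard * (box m _).ncard :=
              ncard_prod_le _ _ (box_finite _ _) (box_finite _ _)
          _ ≤ _ := Nat.mul_le_mul (box_card _ _) (box_card _ _)
      have hreal : ((piece j).ncard : ℝ) ≤
          (2*(⌊t/(c*2^j)⌋₊:ℝ)+1)^(k+1) * (2*(2:ℝ)^(j+1)+1)^(m+1) := by
        have := hcard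
        push_cast at this ⊢
        exact_mod_cast this
      have f1 : (2*(⌊t/(c*2^j)⌋₊:ℝ)+1) ≤ 3 * (t/(c*2^j)) := by
        have hfl : (⌊t/(c*2^j)⌋₊:ℝ) ≤ t/(c*2^j) := Nat.floor_le (le_trans zero_le_one hx)
        nlinarith
      have f2 : (2*(2:ℝ)^(j+1)+1) ≤ 8 * 2^j := by
        have h1 : (1:ℝ) ≤ 2^j := one_le_pow₀ one_le_two
        rw [pow_succ]
        nlinarith
      have hmid : ((piece j).ncard : ℝ) ≤ (3*(t/(c*2^j)))^(k+1) * (8*(2:ℝ)^j)^(m+1) := by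
        refine le_trans hreal ?_
        apply mul_le_mul (pow_le_pow_left₀ (by positivity) f1 _)
          (pow_le_pow_left₀ (by positivity) f2 _) (by positivity) (by positivity)
      refine le_trans hmid ?_
      have key : ((2:ℝ)^j)^(m+1) * 2^j ≤ ((2:ℝ)^j)^(k+1) := by
        rw [← pow_mul, ← pow_add, ← pow_mul]
        apply pow_le_pow_right₀ one_le_two
        have e : j*(m+1)+j = j*(m+2) := by ring
        rw [e]
        exact Nat.mul_le_mul_left j (by omega)
      have keydiv : ((2:ℝ)^j)^(m+1) / ((2:ℝ)^j)^(k+1) ≤ (1/2)^j := by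
        have h2j : ((1:ℝ)/2)^j = ((2:ℝ)^j)⁻¹ := by rw [one_div, inv_pow]
        rw [h2j, div_le_iff₀ (by positivity : (0:ℝ) < ((2:ℝ)^j)^(k+1)),
          inv_mul_eq_div, le_div_iff₀ (by positivity : (0:ℝ) < (2:ℝ)^j)]
        exact key
      have lhs_eq : (3*(t/(c*(2:ℝ)^j)))^(k+1) * (8*(2:ℝ)^j)^(m+1) =
          8^(m+1) * (3/c)^(k+1) * t^(k+1) * (((2:ℝ)^j)^(m+1) / ((2:ℝ)^j)^(k+1)) := by
        ring
      rw [lhs_eq]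
      exact mul_le_mul_of_nonneg_left keydiv (by positivity)
    · have hempty : piece j = ∅ := by
        rw [Set.eq_empty_iff_forall_notMem]
        intro q hq
        have h1 := hqb q hq.1
        have h2 := (hone q hq.1).1
        have h3 := (hone q hq.1).2
        have hlo' : (2:ℝ)^j ≤ (polyHeight q.2 : ℝ) := by exact_mod_cast hq.2.1
        have ht' : t < c * 2^j := by
          have := (div_lt_one (by positivity : (0:ℝ) < c * 2^j)).mp hx
          linarith
        have hh2 : (0:ℝ) ≤ c * (polyHeight q.2 : ℝ) := by positivity
        have e2 := mul_le_mul_of_nonneg_left h2 hh2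
        have e1 := mul_le_mul_of_nonneg_left hlo' hc.le
        nlinarith [e1, e2, h1, ht']
      rw [hempty]
      simp only [Set.ncard_empty, Nat.cast_zero]
      positivity
  calc ((Pairs k m t).ncard : ℝ) ≤ ∑ j ∈ Finset.range (U+1), ((piece j).ncard:ℝ) := step1
    _ ≤ ∑ j ∈ Finset.range (U+1), 8^(m+1) * (3/c)^(k+1) * t^(k+1) * (1/2)^j :=
        Finset.sum_le_sum (fun j _ => step2 j)
    _ = 8^(m+1) * (3/c)^(k+1) * t^(k+1) * ∑ j ∈ Finset.range (U+1), (1/2:ℝ)^j := by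
        rw [← Finset.mul_sum]
    _ ≤ 8^(m+1) * (3/c)^(k+1) * t^(k+1) * 2 := by
        exact mul_le_mul_of_nonneg_left (sum_geometric_two_le _) (by positivity)
    _ = 2 * 8^(m+1) * (3/c)^(k+1) * t^(k+1) := by ring
-- the Eisenstein family member: a*X^k + sum_{i<k} 2*b_i*X^i
noncomputable def Epoly (k : ℕ) (a : ℤ) (b : Fin k → ℤ) : Polynomial ℤ :=
  C a * X ^ k + ∑ i : Fin k, C (2 * b i) * X ^ (i : ℕ)

lemma Epoly_coeff_lt (k : ℕ) (a : ℤ) (b : Fin k → ℤ) (i : ℕ) (hi : i < k) :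
    (Epoly k a b).coeff i = 2 * b ⟨i, hi⟩ := by
  rw [Epoly, Polynomial.coeff_add, Polynomial.coeff_C_mul, Polynomial.coeff_X_pow,
    if_neg (by omega), Polynomial.finset_sum_coeff]
  simp only [Polynomial.coeff_C_mul, Polynomial.coeff_X_pow]
  rw [Finset.sum_eq_single (⟨i, hi⟩ : Fin k)]
  · simp
  · intro c _ hc
    have : i ≠ (c : ℕ) := fun he => hc (by simp [Fin.ext_iff, ← he])
    simp [this]
  · simp

lemma Epoly_coeff_k (k : ℕ) (a : ℤ) (b : Fin k → ℤ) : (Epoly k a b).coeff k = a := by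
  rw [Epoly, Polynomial.coeff_add, Polynomial.coeff_C_mul, Polynomial.coeff_X_pow, if_pos rfl,
    Polynomial.finset_sum_coeff]
  have : ∀ c : Fin k, (C (2 * b c) * X ^ (c:ℕ)).coeff k = 0 := by
    intro c
    rw [Polynomial.coeff_C_mul, Polynomial.coeff_X_pow, if_neg (by omega)]
    ring
  rw [Finset.sum_congr rfl (fun c _ => this c), Finset.sum_const, smul_zero]
  ring

lemma Epoly_coeff_gt (k : ℕ) (a : ℤ) (b : Fin k → ℤ) (i : ℕ) (hi : k < i) :
    (Epoly k a b).coeff i = 0 := by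
  rw [Epoly, Polynomial.coeff_add, Polynomial.coeff_C_mul, Polynomial.coeff_X_pow,
    if_neg (by omega), Polynomial.finset_sum_coeff]
  have : ∀ c : Fin k, (C (2 * b c) * X ^ (c:ℕ)).coeff i = 0 := by
    intro c
    rw [Polynomial.coeff_C_mul, Polynomial.coeff_X_pow, if_neg (by omega)]
    ring
  rw [Finset.sum_congr rfl (fun c _ => this c), Finset.sum_const, smul_zero]
  ring

lemma Epoly_natDegree (k : ℕ) (a : ℤ) (b : Fin k → ℤ) (ha : a ≠ 0) :
    (Epoly k a b).natDegree = k := by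
  apply Polynomial.natDegree_eq_of_le_of_coeff_ne_zero
  · apply Polynomial.natDegree_le_iff_coeff_eq_zero.mpr
    intro i hi
    exact Epoly_coeff_gt k a b i hi
  · rw [Epoly_coeff_k]; exact ha

lemma Epoly_ne_zero (k : ℕ) (a : ℤ) (b : Fin k → ℤ) (ha : a ≠ 0) : Epoly k a b ≠ 0 := by
  intro h
  apply ha
  have := Epoly_coeff_k k a b
  rw [h] at this
  simpa using this.symm

lemma Epoly_irreducible (k : ℕ) (hk : 2 ≤ k) (a : ℤ) (b : Fin k → ℤ)
    (ha : Odd a) (hb0 : Odd (b ⟨0, by omega⟩))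
    (hgcd : Int.gcd a (Int.gcd (b ⟨0, by omega⟩) (b ⟨1, by omega⟩)) = 1) :
    Irreducible (Epoly k a b) := by
  have ha0 : a ≠ 0 := by rintro rfl; simp [Int.odd_iff] at ha
  apply Polynomial.irreducible_of_eisenstein_criterion
    (P := Ideal.span {(2:ℤ)}) ((Ideal.span_singleton_prime (by norm_num)).mpr Int.prime_two)
  · rw [Polynomial.leadingCoeff, Epoly_natDegree k a b ha0, Epoly_coeff_k,
      Ideal.mem_span_singleton]
    rw [Int.odd_iff] at ha
    omega
  · intro i hdeg
    have hdeg' : (Epoly k a b).degree = k := by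
      rw [Polynomial.degree_eq_natDegree (Epoly_ne_zero k a b ha0), Epoly_natDegree k a b ha0]
    rw [hdeg'] at hdeg
    have hik : i < k := by exact_mod_cast hdeg
    rw [Epoly_coeff_lt k a b i hik, Ideal.mem_span_singleton]
    exact Dvd.intro _ rfl
  · rw [Polynomial.degree_eq_natDegree (Epoly_ne_zero k a b ha0), Epoly_natDegree k a b ha0]
    exact_mod_cast (by omega : 0 < k)
  · rw [Epoly_coeff_lt k a b 0 (by omega), Ideal.span_singleton_pow, Ideal.mem_span_singleton]
    rw [Int.odd_iff] at hb0
    omega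
  · intro r hr
    rw [Polynomial.C_dvd_iff_dvd_coeff] at hr
    have h1 : r ∣ a := by have := hr k; rwa [Epoly_coeff_k] at this
    have hodd : ¬ ((2:ℤ) ∣ r) := by
      intro h2
      have h2a : (2:ℤ) ∣ a := h2.trans h1
      rw [Int.odd_iff] at ha
      omega
    have hcop : IsCoprime r 2 := by
      rw [Int.isCoprime_iff_gcd_eq_one]
      have hg2 : ((Int.gcd r 2 : ℕ) : ℤ) ∣ 2 := Int.gcd_dvd_right r 2
      have hg2' : Int.gcd r 2 ∣ 2 := by exact_mod_cast hg2
      rcases (Nat.dvd_prime Nat.prime_two).mp hg2' with h | h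
      · exact h
      · exfalso
        apply hodd
        have := Int.gcd_dvd_left (a := r) (b := 2)
        rw [h] at this
        exact_mod_cast this
    have h2 : r ∣ b ⟨0, by omega⟩ := by
      have := hr 0
      rw [Epoly_coeff_lt k a b 0 (by omega)] at this
      exact hcop.dvd_of_dvd_mul_left this
    have h3 : r ∣ b ⟨1, by omega⟩ := by
      have := hr 1
      rw [Epoly_coeff_lt k a b 1 (by omega)] at this
      exact hcop.dvd_of_dvd_mul_left this
    have h4 : r ∣ ((Int.gcd (b ⟨0, by omega⟩) (b ⟨1, by omega⟩) : ℕ) : ℤ) := Int.dvd_coe_gcd h2 h3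
    have h5 := Int.dvd_coe_gcd h1 h4
    rw [hgcd] at h5
    exact isUnit_of_dvd_one (by exact_mod_cast h5)
-- progression count
lemma card_filter_dvd_le (L d : ℕ) (hd : 1 ≤ d) (Q : ℤ → Prop) [DecidablePred Q]
    (hQ : ∀ x y : ℤ, Q x → Q y → (d:ℤ) ∣ (x - y)) :
    ((Finset.Icc (1:ℤ) L).filter Q).card ≤ (L - 1) / d + 1 := by
  rw [← Finset.card_range ((L - 1) / d + 1)]
  apply Finset.card_le_card_of_injOn (fun α => (α - 1).toNat / d)
  · intro α hα
    simp only [Finset.mem_coe, Finset.mem_filter, Finset.mem_Icc] at hα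
    simp only [Finset.mem_coe, Finset.mem_range]
    have h1 : (α - 1).toNat ≤ L - 1 := by omega
    have := Nat.div_le_div_right (c := d) h1
    omega
  · intro x hx y hy hxy
    simp only [Finset.mem_coe, Finset.mem_filter, Finset.mem_Icc] at hx hy
    rcases lt_trichotomy x y with h | h | h
    · exfalso
      obtain ⟨q, hq⟩ := hQ y x hy.2 hx.2
      have hq1 : 1 ≤ q := by nlinarith [hx.1.1, hy.1.1]
      have hxy' : (x - 1).toNat / d = (y - 1).toNat / d := hxy
      have hqc : y - x = ((q.toNat * d : ℕ) : ℤ) := by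
        rw [hq]; push_cast; rw [Int.toNat_of_nonneg (by omega : (0:ℤ) ≤ q)]; ring
      set K := q.toNat * d with hK
      have hkey : (y - 1).toNat = (x - 1).toNat + K := by omega
      rw [hkey, hK, Nat.add_mul_div_right _ _ (by omega : 0 < d)] at hxy'
      omega
    · exact h
    · exfalso
      obtain ⟨q, hq⟩ := hQ x y hx.2 hy.2
      have hq1 : 1 ≤ q := by nlinarith [hx.1.1, hy.1.1]
      have hxy' : (x - 1).toNat / d = (y - 1).toNat / d := hxy
      have hqc : x - y = ((q.toNat * d : ℕ) : ℤ) := by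
        rw [hq]; push_cast; rw [Int.toNat_of_nonneg (by omega : (0:ℤ) ≤ q)]; ring
      set K := q.toNat * d with hK
      have hkey : (x - 1).toNat = (y - 1).toNat + K := by omega
      rw [hkey, hK, Nat.add_mul_div_right _ _ (by omega : 0 < d)] at hxy'
      omega

-- telescoping cube sum
lemma sum_cube_le (N : ℕ) : ∑ d ∈ Finset.Icc 3 N, ((1:ℝ)/(d:ℝ)^3) ≤ 1/12 := by
  have key : ∀ N : ℕ, 2 ≤ N → ∑ d ∈ Finset.Icc 3 N, ((1:ℝ)/(d:ℝ)^3) ≤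
      1/12 - 1/(2*(N:ℝ)*((N:ℝ)+1)) := by
    intro N hN
    induction N, hN using Nat.le_induction with
    | base => norm_num
    | succ n hn ih =>
      rw [Finset.sum_Icc_succ_top (by omega)]
      have hih := ih
      have hx : (2:ℝ) ≤ (n:ℝ) := by exact_mod_cast hn
      have hstep : (1:ℝ)/((n:ℝ)+1)^3 ≤ 1/(2*(n:ℝ)*((n:ℝ)+1)) - 1/(2*((n:ℝ)+1)*((n:ℝ)+1+1)) := by
        rw [div_sub_div _ _ (by positivity) (by positivity), div_le_div_iff₀ (by positivity) (by positivity)]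
        ring_nf
        nlinarith [sq_nonneg ((n:ℝ)+1), sq_nonneg (n:ℝ)]
      push_cast
      push_cast at hih
      linarith
  rcases le_or_gt 3 N with h | h
  · have := key N (by omega)
    have hpos : 0 < 1/(2*(N:ℝ)*((N:ℝ)+1)) := by
      have : (3:ℝ) ≤ (N:ℝ) := by exact_mod_cast h
      positivity
    linarith
  · interval_cases N <;> simp

lemma odd_dvd_of_dvd_two_mul (d : ℕ) (hd : Odd d) (x : ℤ) (h : (d:ℤ) ∣ 2 * x) : (d:ℤ) ∣ x := by
  have hcop : IsCoprime ((d:ℤ)) 2 := by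
    rw [Int.isCoprime_iff_gcd_eq_one]
    have hg2' : Int.gcd d 2 ∣ 2 := by
      exact_mod_cast (Int.gcd_dvd_right (a := (d:ℤ)) (b := 2))
    rcases (Nat.dvd_prime Nat.prime_two).mp hg2' with h1 | h1
    · exact h1
    · exfalso
      have h2d : ((2:ℕ):ℤ) ∣ (d:ℤ) := by
        have := Int.gcd_dvd_left (a := (d:ℤ)) (b := 2)
        rw [h1] at this
        exact_mod_cast this
      have : (2:ℕ) ∣ d := by exact_mod_cast h2d
      rw [Nat.odd_iff] at hd
      omega
  exact hcop.dvd_of_dvd_mul_left h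

lemma nat_div_aux (d M : ℕ) (hd3 : 3 ≤ d) (hdM : d ≤ 2*M) (hM : 1 ≤ M) :
    (M-1)/d + 1 ≤ 2*M/d := by
  rcases le_or_gt d M with h | h
  · rw [Nat.le_div_iff_mul_le (by omega)]
    have h1 := Nat.div_mul_le_self (M-1) d
    have h2 : ((M-1)/d + 1) * d = (M-1)/d*d + d := by ring
    rw [h2]
    omega
  · rw [Nat.div_eq_of_lt (by omega), Nat.le_div_iff_mul_le (by omega)]
    omega

noncomputable def Wset (k M : ℕ) : Finset (ℤ × (Fin k → ℤ)) :=
  (Finset.Icc (1:ℤ) M) ×ˢ (Fintype.piFinset fun _ : Fin k => Finset.Icc (1:ℤ) M)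

lemma Wset_card (k M : ℕ) : (Wset k M).card = M^(k+1) := by
  rw [Wset, Finset.card_product, Fintype.card_piFinset]
  have hIcc : (Finset.Icc (1:ℤ) M).card = M := by
    rw [Int.card_Icc]
    omega
  rw [Finset.prod_congr rfl (fun i _ => hIcc), Finset.prod_const, hIcc, Finset.card_univ,
    Fintype.card_fin]
  ring

lemma Dset_card_ge (k M : ℕ) (hk : 2 ≤ k) (hM : 1 ≤ M) :
    (M:ℝ)^(k+1) / 3 ≤ (((Wset k M).filter (fun w => Int.gcd (2*w.1-1)
      (Int.gcd (2*(w.2 ⟨0, by omega⟩)-1) (w.2 ⟨1, by omega⟩)) = 1)).card : ℝ) := by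
  classical
  set i0 : Fin k := ⟨0, by omega⟩
  set i1 : Fin k := ⟨1, by omega⟩
  set cond : ℤ × (Fin k → ℤ) → Prop :=
    fun w => Int.gcd (2*w.1-1) (Int.gcd (2*(w.2 i0)-1) (w.2 i1)) = 1 with hcond
  set bad := (Wset k M).filter (fun w => ¬ cond w) with hbad
  have hsplit : ((Wset k M).filter cond).card + bad.card = (Wset k M).card :=
    Finset.card_filter_add_card_filter_not _
  -- each w in Wset has coordinates in [1, M]
  have hmem : ∀ w ∈ Wset k M, (1 ≤ w.1 ∧ w.1 ≤ (M:ℤ)) ∧ ∀ i, 1 ≤ w.2 i ∧ w.2 i ≤ (M:ℤ) := by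
    intro w hw
    rw [Wset, Finset.mem_product] at hw
    constructor
    · exact Finset.mem_Icc.mp hw.1
    · intro i
      have := (Fintype.mem_piFinset.mp hw.2) i
      exact Finset.mem_Icc.mp this
  -- covering of bad
  set piece : ℕ → Finset (ℤ × (Fin k → ℤ)) := fun d =>
    (Wset k M).filter (fun w => Odd d ∧ (d:ℤ) ∣ (2*w.1-1) ∧ (d:ℤ) ∣ (2*(w.2 i0)-1) ∧
      (d:ℤ) ∣ (w.2 i1)) with hpiece
  have hcover : bad ⊆ (Finset.Icc 3 (2*M)).biUnion piece := by
    intro w hw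
    rw [hbad, Finset.mem_filter] at hw
    obtain ⟨hwW, hwbad⟩ := hw
    set a := 2*w.1 - 1 with hadef
    set g := Int.gcd a (Int.gcd (2*(w.2 i0)-1) (w.2 i1)) with hg
    have hga : (g:ℤ) ∣ a := Int.gcd_dvd_left _ _
    have hgbc : (g:ℤ) ∣ ((Int.gcd (2*(w.2 i0)-1) (w.2 i1) : ℕ) : ℤ) := Int.gcd_dvd_right _ _
    have hgb : (g:ℤ) ∣ (2*(w.2 i0)-1) := hgbc.trans (Int.gcd_dvd_left _ _)
    have hgc : (g:ℤ) ∣ (w.2 i1) := hgbc.trans (Int.gcd_dvd_right _ _)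
    have hw1 := (hmem w hwW).1
    have ha1 : 1 ≤ a := by omega
    have haM : a ≤ 2*(M:ℤ) := by omega
    have hg0 : g ≠ 0 := by
      intro h0
      rw [h0] at hga
      simp at hga
      omega
    have hgodd : Odd g := by
      rcases Nat.even_or_odd g with he | ho
      · exfalso
        obtain ⟨r, hr⟩ := he
        have : (2:ℤ) ∣ a := by
          apply dvd_trans _ hga
          exact_mod_cast (by omega : (2:ℕ) ∣ g)
        omega
      · exact ho
    have hg2 : g ≠ 1 := hwbad
    have hgle : (g:ℤ) ≤ 2*M := le_trans (Int.le_of_dvd (by omega) hga) haM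
    have hg3 : 3 ≤ g := by
      have := Nat.odd_iff.mp hgodd
      omega
    rw [Finset.mem_biUnion]
    refine ⟨g, Finset.mem_Icc.mpr ⟨hg3, by exact_mod_cast hgle⟩, ?_⟩
    rw [hpiece, Finset.mem_filter]
    exact ⟨hwW, hgodd, hga, hgb, hgc⟩
  have hpiece_card : ∀ d ∈ Finset.Icc 3 (2*M),
      (piece d).card ≤ (2*M/d) * ((2*M/d) * ((2*M/d) * M^(k-2))) := by
    intro d hd
    rw [Finset.mem_Icc] at hd
    by_cases hodd : Odd d
    swap
    · have hempty : piece d = ∅ :=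
        Finset.filter_false_of_mem (fun w _ => by simp only [not_and]; intro h; exact absurd h hodd)
      simp [hempty]
    · set F1 := (Finset.Icc (1:ℤ) M).filter (fun x => (d:ℤ) ∣ (2*x-1)) with hF1
      set F3 := (Finset.Icc (1:ℤ) M).filter (fun x => (d:ℤ) ∣ x) with hF3
      set piF := Fintype.piFinset (fun i : Fin k =>
        if i = i0 then F1 else if i = i1 then F3 else Finset.Icc (1:ℤ) M) with hpiF
      have hne : i0 ≠ i1 := by
        refine Fin.ne_of_val_ne ?_
        show (0:ℕ) ≠ 1
        omega
      have hsub : piece d ⊆ F1 ×ˢ piF := by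
        intro w hw
        rw [hpiece, Finset.mem_filter] at hw
        obtain ⟨hwW, _, h1, h2, h3⟩ := hw
        rw [Wset, Finset.mem_product] at hwW
        rw [Finset.mem_product]
        refine ⟨Finset.mem_filter.mpr ⟨hwW.1, h1⟩, ?_⟩
        rw [hpiF, Fintype.mem_piFinset]
        intro i
        have hi := Fintype.mem_piFinset.mp hwW.2 i
        by_cases e0 : i = i0
        · rw [if_pos e0, hF1, Finset.mem_filter, e0]
          exact ⟨e0 ▸ hi, h2⟩
        · rw [if_neg e0]
          by_cases e1 : i = i1
          · rw [if_pos e1, hF3, Finset.mem_filter, e1]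
            exact ⟨e1 ▸ hi, h3⟩
          · rw [if_neg e1]
            exact hi
      have hdiff1 : ∀ x y : ℤ, (d:ℤ) ∣ (2*x-1) → (d:ℤ) ∣ (2*y-1) → (d:ℤ) ∣ (x - y) := by
        intro x y hx hy
        apply odd_dvd_of_dvd_two_mul d hodd
        have : 2*(x-y) = (2*x-1) - (2*y-1) := by ring
        rw [this]
        exact dvd_sub hx hy
      have hc1 : F1.card ≤ 2*M/d := by
        refine le_trans (card_filter_dvd_le M d (by omega) _ hdiff1)
          (nat_div_aux d M hd.1 hd.2 hM)
      have hc3 : F3.card ≤ 2*M/d := by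
        refine le_trans (card_filter_dvd_le M d (by omega) _ (fun x y hx hy => dvd_sub hx hy))
          (nat_div_aux d M hd.1 hd.2 hM)
      have hprod2 : ∏ i : Fin k,
          ((if i = i0 then F1 else if i = i1 then F3 else Finset.Icc (1:ℤ) M)).card ≤
          F1.card * (F3.card * M^(k-2)) := by
        rw [← Finset.mul_prod_erase Finset.univ _ (Finset.mem_univ i0),
          ← Finset.mul_prod_erase _ _
            (Finset.mem_erase.mpr ⟨Ne.symm hne, Finset.mem_univ i1⟩)]
        rw [if_pos rfl, if_neg (Ne.symm hne), if_pos rfl]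
        have hrest : ∏ i ∈ (Finset.univ.erase i0).erase i1,
            ((if i = i0 then F1 else if i = i1 then F3 else Finset.Icc (1:ℤ) M)).card
            = M^(k-2) := by
          have : ∀ i ∈ (Finset.univ.erase i0).erase i1,
              ((if i = i0 then F1 else if i = i1 then F3 else Finset.Icc (1:ℤ) M)).card = M := by
            intro i hi
            rw [Finset.mem_erase, Finset.mem_erase] at hi
            rw [if_neg hi.2.1, if_neg hi.1, Int.card_Icc]
            omega
          rw [Finset.prod_congr rfl this, Finset.prod_const]
          congr 1
          rw [Finset.card_erase_of_mem (Finset.mem_erase.mpr ⟨Ne.symm hne, Finset.mem_univ i1⟩),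
            Finset.card_erase_of_mem (Finset.mem_univ i0), Finset.card_univ, Fintype.card_fin]
          omega
        rw [hrest]
      calc (piece d).card ≤ (F1 ×ˢ piF).card := Finset.card_le_card hsub
        _ = F1.card * ∏ i : Fin k,
            ((if i = i0 then F1 else if i = i1 then F3 else Finset.Icc (1:ℤ) M)).card := by
            rw [Finset.card_product, hpiF, Fintype.card_piFinset]
        _ ≤ F1.card * (F1.card * (F3.card * M^(k-2))) :=
            Nat.mul_le_mul le_rfl hprod2
        _ ≤ (2*M/d) * ((2*M/d) * ((2*M/d) * M^(k-2))) := by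
            exact Nat.mul_le_mul hc1 (Nat.mul_le_mul hc1 (Nat.mul_le_mul hc3 le_rfl))
  -- cast to real and sum up
  have hMR : (1:ℝ) ≤ (M:ℝ) := by exact_mod_cast hM
  have hMpow : (M:ℝ)^(k-2) * (M:ℝ)^3 = (M:ℝ)^(k+1) := by
    rw [← pow_add]
    congr 1
    omega
  have hbadR : (bad.card : ℝ) ≤ 2/3 * (M:ℝ)^(k+1) := by
    have h1 : bad.card ≤ ∑ d ∈ Finset.Icc 3 (2*M), (piece d).card :=
      le_trans (Finset.card_le_card hcover) Finset.card_biUnion_le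
    have h2 : ∀ d ∈ Finset.Icc 3 (2*M),
        ((piece d).card : ℝ) ≤ 8 * (M:ℝ)^(k+1) * (1/(d:ℝ)^3) := by
      intro d hd
      rw [Finset.mem_Icc] at hd
      have hd0 : (0:ℝ) < (d:ℝ) := by exact_mod_cast (by omega : 0 < d)
      have hcast : ((piece d).card : ℝ) ≤ ((2*M/d : ℕ):ℝ) * (((2*M/d : ℕ):ℝ) *
          (((2*M/d : ℕ):ℝ) * ((M:ℝ))^(k-2))) := by
        have := hpiece_card d (Finset.mem_Icc.mpr hd)
        exact_mod_cast this
      have hq : ((2*M/d : ℕ):ℝ) ≤ 2*(M:ℝ)/(d:ℝ) := by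
        refine le_trans Nat.cast_div_le (le_of_eq ?_)
        push_cast
        ring
      have hqn : (0:ℝ) ≤ ((2*M/d : ℕ):ℝ) := by positivity
      calc ((piece d).card : ℝ) ≤ ((2*M/d : ℕ):ℝ) * (((2*M/d : ℕ):ℝ) *
            (((2*M/d : ℕ):ℝ) * ((M:ℝ))^(k-2))) := hcast
        _ ≤ (2*(M:ℝ)/(d:ℝ)) * ((2*(M:ℝ)/(d:ℝ)) *
            ((2*(M:ℝ)/(d:ℝ)) * ((M:ℝ))^(k-2))) := by
            apply mul_le_mul hq (mul_le_mul hq (mul_le_mul hq le_rfl (by positivity)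
              (by positivity)) (by positivity) (by positivity)) (by positivity) (by positivity)
        _ = 8 * (M:ℝ)^(k+1) * (1/(d:ℝ)^3) := by
            rw [← hMpow]
            field_simp
            ring
    calc (bad.card : ℝ) ≤ ((∑ d ∈ Finset.Icc 3 (2*M), (piece d).card : ℕ) : ℝ) := by
          exact_mod_cast h1
      _ = ∑ d ∈ Finset.Icc 3 (2*M), ((piece d).card : ℝ) := by push_cast; rfl
      _ ≤ ∑ d ∈ Finset.Icc 3 (2*M), 8 * (M:ℝ)^(k+1) * (1/(d:ℝ)^3) := Finset.sum_le_sum h2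
      _ = 8 * (M:ℝ)^(k+1) * ∑ d ∈ Finset.Icc 3 (2*M), (1/(d:ℝ)^3) := by rw [← Finset.mul_sum]
      _ ≤ 8 * (M:ℝ)^(k+1) * (1/12) := by
          exact mul_le_mul_of_nonneg_left (sum_cube_le (2*M)) (by positivity)
      _ = 2/3 * (M:ℝ)^(k+1) := by ring
  have hWR : ((Wset k M).card : ℝ) = (M:ℝ)^(k+1) := by
    rw [Wset_card]
    push_cast
    rfl
  have hDR : (((Wset k M).filter cond).card : ℝ) = ((Wset k M).card : ℝ) - (bad.card : ℝ) := by
    have := hsplit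
    push_cast [← this]
    ring
  rw [hDR, hWR]
  linarith
lemma Rkn_finite (k n : ℕ) (t : ℝ) : (Rkn k n t).Finite := by
  apply Set.Finite.subset (box_finite n ⌊t⌋₊)
  rintro p ⟨⟨hdeg, hht, _⟩, _⟩
  exact ⟨le_of_eq hdeg, Nat.le_floor hht⟩

lemma Pairs_finite (k m : ℕ) (t : ℝ) : (Pairs k m t).Finite := by
  obtain ⟨c, hc, hgel⟩ := gelfond_int k m
  apply Set.Finite.subset ((box_finite k ⌊t/c⌋₊).prod (box_finite m ⌊t/c⌋₊))
  intro q hq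
  have h := le_trans (hgel q.1 q.2 hq.1 hq.2.1 hq.2.2.1 hq.2.2.2.1) hq.2.2.2.2
  have h1 : (1:ℝ) ≤ (polyHeight q.1 : ℝ) := by exact_mod_cast one_le_polyHeight q.1 hq.1
  have h2 : (1:ℝ) ≤ (polyHeight q.2 : ℝ) := by exact_mod_cast one_le_polyHeight q.2 hq.2.1
  have hg1 : (0:ℝ) ≤ (polyHeight q.1 : ℝ) := by linarith
  have hg2 : (0:ℝ) ≤ (polyHeight q.2 : ℝ) := by linarith
  have e1 := mul_le_mul_of_nonneg_left h2 (mul_nonneg hc.le hg1)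
  have e2 := mul_le_mul_of_nonneg_left h1 (mul_nonneg hc.le hg2)
  constructor
  · refine ⟨hq.2.2.1, Nat.le_floor ?_⟩
    rw [le_div_iff₀ hc]
    nlinarith [e1, h]
  · refine ⟨hq.2.2.2.1, Nat.le_floor ?_⟩
    rw [le_div_iff₀ hc]
    nlinarith [e2, h]

lemma Rkn_subset_mul_image (k n : ℕ) (hkn : k < n) (t : ℝ) :
    Rkn k n t ⊆ (fun q : Polynomial ℤ × Polynomial ℤ => q.1 * q.2) '' (Pairs k (n - k) t) := by
  rintro p ⟨⟨hdeg, hht, _⟩, g, hgirr, hgdeg, hdvd⟩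
  obtain ⟨h, rfl⟩ := hdvd
  have hg0 : g ≠ 0 := hgirr.ne_zero
  have hp0 : g * h ≠ 0 := by
    intro h0
    rw [h0] at hdeg
    rw [Polynomial.natDegree_zero] at hdeg
    omega
  have hh0 : h ≠ 0 := right_ne_zero_of_mul hp0
  have hdegs : g.natDegree + h.natDegree = n := by
    rw [← Polynomial.natDegree_mul hg0 hh0]
    exact hdeg
  refine ⟨(g, h), ⟨hg0, hh0, le_of_eq hgdeg, ?_, hht⟩, rfl⟩
  show h.natDegree ≤ n - k
  omega

lemma lower_glue (k m n M : ℕ) (hk : 2 ≤ k) (hm : 1 ≤ m) (hn : n = k + m) (hM : 1 ≤ M)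
    (t : ℝ) (hMt : (4*(M:ℝ)) ≤ t) :
    (M:ℝ)^(k+1)/3 ≤ ((Rkn k n t).ncard : ℝ) := by
  classical
  set i0 : Fin k := ⟨0, by omega⟩ with hi0
  set i1 : Fin k := ⟨1, by omega⟩ with hi1
  set D := (Wset k M).filter (fun w => Int.gcd (2*w.1-1)
      (Int.gcd (2*(w.2 i0)-1) (w.2 i1)) = 1) with hD
  set bvec : (ℤ × (Fin k → ℤ)) → (Fin k → ℤ) :=
    fun w i => if i = i0 then 2*(w.2 i)-1 else w.2 i with hbvec
  set φ : (ℤ × (Fin k → ℤ)) → Polynomial ℤ :=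
    fun w => Epoly k (2*w.1-1) (bvec w) * X^m with hφ
  -- coefficient recovery
  have hcoeff : ∀ w : ℤ × (Fin k → ℤ), ∀ j : ℕ, (φ w).coeff (j + m) =
      (Epoly k (2*w.1-1) (bvec w)).coeff j := by
    intro w j
    rw [hφ]
    simp only
    rw [Polynomial.coeff_mul_X_pow']
    rw [if_pos (by omega)]
    congr 1
    omega
  have hinj : Set.InjOn φ ↑D := by
    intro w _ w' _ heq
    have hc : ∀ j : ℕ, (Epoly k (2*w.1-1) (bvec w)).coeff j =
        (Epoly k (2*w'.1-1) (bvec w')).coeff j := by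
      intro j
      rw [← hcoeff w j, ← hcoeff w' j, heq]
    have h1 : w.1 = w'.1 := by
      have := hc k
      rw [Epoly_coeff_k, Epoly_coeff_k] at this
      omega
    have h2 : w.2 = w'.2 := by
      funext i
      have := hc i
      rw [Epoly_coeff_lt k _ _ i i.isLt, Epoly_coeff_lt k _ _ i i.isLt] at this
      simp only [hbvec] at this
      by_cases hii : (⟨(i:ℕ), i.isLt⟩ : Fin k) = i0
      · rw [if_pos hii, if_pos hii] at this
        have : w.2 ⟨(i:ℕ), i.isLt⟩ = w'.2 ⟨(i:ℕ), i.isLt⟩ := by omega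
        simpa using this
      · rw [if_neg hii, if_neg hii] at this
        have : w.2 ⟨(i:ℕ), i.isLt⟩ = w'.2 ⟨(i:ℕ), i.isLt⟩ := by omega
        simpa using this
    exact Prod.ext h1 h2
  have himg : φ '' ↑D ⊆ Rkn k n t := by
    rintro p ⟨w, hwD, rfl⟩
    rw [hD, Finset.coe_filter] at hwD
    obtain ⟨hwW, hgcd⟩ := hwD
    have hmemW : (1 ≤ w.1 ∧ w.1 ≤ (M:ℤ)) ∧ ∀ i, 1 ≤ w.2 i ∧ w.2 i ≤ (M:ℤ) := by
      rw [Wset, Finset.mem_product] at hwW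
      refine ⟨Finset.mem_Icc.mp hwW.1, fun i => Finset.mem_Icc.mp ?_⟩
      exact (Fintype.mem_piFinset.mp hwW.2) i
    set a := 2*w.1-1 with ha
    have ha0 : a ≠ 0 := by omega
    have haodd : Odd a := ⟨w.1 - 1, by omega⟩
    have hb0 : bvec w i0 = 2*(w.2 i0)-1 := by simp only [hbvec, if_pos rfl]
    have hb0odd : Odd (bvec w i0) := by
      rw [hb0]
      exact ⟨w.2 i0 - 1, by omega⟩
    have hb1 : bvec w i1 = w.2 i1 := by
      simp only [hbvec]
      rw [if_neg (by refine Fin.ne_of_val_ne ?_; show (1:ℕ) ≠ 0; omega)]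
    have hgcd' : Int.gcd a (Int.gcd (bvec w i0) (bvec w i1)) = 1 := by
      rw [hb1]
      rw [hb0]
      exact hgcd
    have hirr : Irreducible (Epoly k a (bvec w)) := Epoly_irreducible k hk a (bvec w) haodd hb0odd hgcd'
    have hE0 : Epoly k a (bvec w) ≠ 0 := Epoly_ne_zero k a (bvec w) ha0
    have hdeg : (Epoly k a (bvec w) * X^m).natDegree = n := by
      rw [Polynomial.natDegree_mul hE0 (pow_ne_zero m Polynomial.X_ne_zero),
        Epoly_natDegree k a (bvec w) ha0, Polynomial.natDegree_X_pow]
      omega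
    have hht : ((polyHeight (Epoly k a (bvec w) * X^m) : ℕ) : ℝ) ≤ t := by
      have hle : polyHeight (Epoly k a (bvec w) * X^m) ≤ 4*M := by
        rw [polyHeight_le_iff]
        intro j
        rw [Polynomial.coeff_mul_X_pow']
        by_cases hjm : m ≤ j
        · rw [if_pos hjm]
          rcases lt_trichotomy (j - m) k with hlt | heq | hgt
          · rw [Epoly_coeff_lt k a (bvec w) (j-m) hlt]
            have hb := (hmemW.2 ⟨j-m, hlt⟩)
            rw [hbvec]
            simp only
            split
            · have := hmemW.2 ⟨j-m, hlt⟩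
              omega
            · omega
          · rw [heq, Epoly_coeff_k]
            omega
          · rw [Epoly_coeff_gt k a (bvec w) (j-m) hgt]
            simp
        · rw [if_neg hjm]
          simp
      calc ((polyHeight (Epoly k a (bvec w) * X^m) : ℕ) : ℝ) ≤ ((4*M : ℕ):ℝ) := by
            exact_mod_cast hle
        _ ≤ t := by
            push_cast
            linarith
    have hred : ¬ Irreducible ((Epoly k a (bvec w) * X^m).map (Int.castRingHom ℚ)) := by
      intro hI
      rw [Polynomial.map_mul, Polynomial.map_pow, Polynomial.map_X] at hI
      rcases hI.isUnit_or_isUnit rfl with hu | hu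
      · have : ((Epoly k a (bvec w)).map (Int.castRingHom ℚ)).natDegree = k := by
          rw [Polynomial.natDegree_map_eq_of_injective
            (Int.cast_injective (α := ℚ)) , Epoly_natDegree k a (bvec w) ha0]
        exact Polynomial.not_isUnit_of_natDegree_pos _ (by omega) hu
      · have : ((X : Polynomial ℚ)^m).natDegree = m := Polynomial.natDegree_X_pow m
        exact Polynomial.not_isUnit_of_natDegree_pos _ (by omega) hu
    exact ⟨⟨hdeg, hht, hred⟩, Epoly k a (bvec w), hirr,
      Epoly_natDegree k a (bvec w) ha0, Dvd.intro _ rfl⟩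
  have hcards : (D.card : ℝ) ≤ ((Rkn k n t).ncard : ℝ) := by
    have h1 : (φ '' ↑D).ncard = D.card := by
      rw [Set.ncard_image_of_injOn hinj, Set.ncard_coe_finset]
    have h2 : (φ '' ↑D).ncard ≤ (Rkn k n t).ncard :=
      Set.ncard_le_ncard himg (Rkn_finite k n t)
    rw [h1] at h2
    exact_mod_cast h2
  exact le_trans (Dset_card_ge k M hk hM) hcards

/-- For fixed `k, n` with `1 < n/2 < k < n`, as `t → ∞`,
`t^{k+1} ≪ |R_{k,n}(t)| ≪ t^{k+1}`. -/
theorem stmt3 :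
    ∀ n k : ℕ, 1 < (n : ℝ) / 2 → (n : ℝ) / 2 < (k : ℝ) → k < n →
      ∃ c C : ℝ, 0 < c ∧ 0 < C ∧ ∃ t₀ : ℝ, ∀ t : ℝ, t₀ ≤ t →
        c * t ^ (k + 1) ≤ ((Rkn k n t).ncard : ℝ) ∧
        ((Rkn k n t).ncard : ℝ) ≤ C * t ^ (k + 1) := by
  intro n k h1 h2 h3
  have hn2 : 2 < n := by
    have : (2:ℝ) < (n:ℝ) := by linarith
    exact_mod_cast this
  have h2k : n < 2*k := by
    have : (n:ℝ) < 2*(k:ℝ) := by linarith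
    exact_mod_cast this
  have hk2 : 2 ≤ k := by omega
  set m := n - k with hmdef
  have hm1 : 1 ≤ m := by omega
  have hmk : m < k := by omega
  have hn : n = k + m := by omega
  obtain ⟨C, hC, hCle⟩ := pairs_card_le k m hmk
  refine ⟨(1/3) * (1/8)^(k+1), C, by positivity, hC, 8, ?_⟩
  intro t ht8
  have ht1 : (1:ℝ) ≤ t := by linarith
  have ht0 : (0:ℝ) < t := by linarith
  constructor
  · -- lower bound
    set M := ⌊t⌋₊ / 4 with hMdef
    have hfl : ((⌊t⌋₊ : ℕ) : ℝ) ≤ t := Nat.floor_le (by linarith)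
    have hfl2 : t < ((⌊t⌋₊ : ℕ) : ℝ) + 1 := Nat.lt_floor_add_one t
    have hfl8 : 8 ≤ ⌊t⌋₊ := Nat.le_floor (by exact_mod_cast ht8)
    have hM1 : 1 ≤ M := by omega
    have hMt : 4*(M:ℝ) ≤ t := by
      have h4 : 4 * M ≤ ⌊t⌋₊ := by omega
      calc 4*(M:ℝ) = ((4*M : ℕ) : ℝ) := by push_cast; ring
        _ ≤ ((⌊t⌋₊ : ℕ) : ℝ) := by exact_mod_cast h4
        _ ≤ t := hfl
    have hlow := lower_glue k m n M hk2 hm1 hn hM1 t hMt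
    have hM8 : t/8 ≤ (M:ℝ) := by
      have h4 : ⌊t⌋₊ ≤ 4*M + 3 := by omega
      have h4' : ((⌊t⌋₊:ℕ):ℝ) ≤ 4*(M:ℝ) + 3 := by exact_mod_cast h4
      linarith
    have hpow : (t/8)^(k+1) ≤ (M:ℝ)^(k+1) :=
      pow_le_pow_left₀ (by positivity) hM8 _
    have heq : (1/3) * (1/8:ℝ)^(k+1) * t^(k+1) = (t/8)^(k+1)/3 := by
      rw [div_pow, div_pow]
      ring
    rw [heq]
    calc (t/8)^(k+1)/3 ≤ (M:ℝ)^(k+1)/3 := by linarith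
      _ ≤ ((Rkn k n t).ncard : ℝ) := hlow
  · -- upper bound
    have hsub := Rkn_subset_mul_image k n h3 t
    have hfin := Pairs_finite k m t
    have h1' : (Rkn k n t).ncard ≤
        ((fun q : Polynomial ℤ × Polynomial ℤ => q.1 * q.2) '' (Pairs k m t)).ncard :=
      Set.ncard_le_ncard (by rw [hmdef]; exact hsub) (hfin.image _)
    have h2' : ((fun q : Polynomial ℤ × Polynomial ℤ => q.1 * q.2) '' (Pairs k m t)).ncard ≤
        (Pairs k m t).ncard := Set.ncard_image_le hfin
    calc ((Rkn k n t).ncard : ℝ) ≤ ((Pairs k m t).ncard : ℝ) := by exact_mod_cast le_trans h1' h2'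
      _ ≤ C * t^(k+1) := hCle t ht1
end

section
/- For every integer n ≥ 3, as t → ∞ one has |R_{n-1,n}(t)| ≍ t^n; that is, there exist positive constants c, C such that c · t^n ≤ |R_{n-1,n}(t)| ≤ C · t^n for all sufficiently large t. -/
open Polynomial

lemma natAbs_coeff_le_height (p : Polynomial ℤ) (k : ℕ) :
    (p.coeff k).natAbs ≤ polyHeight p := by
  by_cases h : k ∈ p.support
  · exact Finset.le_sup (f := fun i => (p.coeff i).natAbs) h
  · simp [Polynomial.notMem_support_iff.mp h]

lemma height_le_of_forall (p : Polynomial ℤ) (B : ℕ)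
    (h : ∀ k, (p.coeff k).natAbs ≤ B) : polyHeight p ≤ B :=
  Finset.sup_le fun i _ => h i

lemma abs_coeff_le (p : Polynomial ℤ) {t : ℝ} (ht : (polyHeight p : ℝ) ≤ t) (k : ℕ) :
    |p.coeff k| ≤ (⌊t⌋₊ : ℤ) := by
  have h1 : polyHeight p ≤ ⌊t⌋₊ := Nat.le_floor ht
  have h2 := natAbs_coeff_le_height p k
  have : (p.coeff k).natAbs ≤ ⌊t⌋₊ := le_trans h2 h1
  rw [Int.abs_eq_natAbs]
  exact_mod_cast this

lemma coeff_lin_mul (g : Polynomial ℤ) (a b : ℤ) (k : ℕ) :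
    (g * (C a * X + C b)).coeff (k+1) = a * g.coeff k + b * g.coeff (k+1) := by
  rw [mul_add, Polynomial.coeff_add, ← mul_assoc, Polynomial.coeff_mul_X,
    Polynomial.coeff_mul_C, Polynomial.coeff_mul_C]
  ring

lemma coeff_lin_mul_zero (g : Polynomial ℤ) (a b : ℤ) :
    (g * (C a * X + C b)).coeff 0 = b * g.coeff 0 := by
  rw [mul_add, Polynomial.coeff_add, ← mul_assoc]
  have h0 : ((g * C a) * X).coeff 0 = 0 := by simp
  rw [h0, Polynomial.coeff_mul_C]
  ring

lemma bound_b (g : Polynomial ℤ) (a b T : ℤ) (d : ℕ) (hd : g.natDegree ≤ d)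
    (hab : |a| ≤ |b|) (hT : ∀ k, |(g * (C a * X + C b)).coeff k| ≤ T) :
    ∀ k, |b| * |g.coeff k| ≤ ((d:ℤ)+1) * T := by
  have hT0 : (0:ℤ) ≤ T := le_trans (abs_nonneg _) (hT 0)
  have claim : ∀ k : ℕ, |b| * |g.coeff k| ≤ ((k:ℤ)+1) * T := by
    intro k
    induction k with
    | zero =>
      have h := hT 0
      rw [coeff_lin_mul_zero, abs_mul] at h
      simpa using h
    | succ k ih =>
      have h := hT (k+1)
      rw [coeff_lin_mul] at h
      have h2 : |b * g.coeff (k+1)| ≤ T + |a * g.coeff k| := by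
        have e : b * g.coeff (k+1)
            = (a * g.coeff k + b * g.coeff (k+1)) + (-(a * g.coeff k)) := by ring
        rw [e]
        have h5 := abs_add_le (a * g.coeff k + b * g.coeff (k+1)) (-(a * g.coeff k))
        rw [abs_neg] at h5
        linarith
      rw [abs_mul] at h2
      have h4 : |a| * |g.coeff k| ≤ |b| * |g.coeff k| :=
        mul_le_mul_of_nonneg_right hab (abs_nonneg _)
      rw [abs_mul] at h2
      push_cast
      nlinarith [abs_nonneg (g.coeff (k+1)), abs_nonneg b]
  intro k
  rcases le_or_gt k d with hk | hk
  · calc |b| * |g.coeff k| ≤ ((k:ℤ)+1) * T := claim k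
      _ ≤ ((d:ℤ)+1) * T := by
        apply mul_le_mul_of_nonneg_right _ hT0
        exact_mod_cast by omega
  · rw [Polynomial.coeff_eq_zero_of_natDegree_lt (by omega)]
    simp
    positivity

lemma bound_a (g : Polynomial ℤ) (a b T : ℤ) (d : ℕ) (hd : g.natDegree ≤ d)
    (hab : |b| ≤ |a|) (hT : ∀ k, |(g * (C a * X + C b)).coeff k| ≤ T) :
    ∀ k, |a| * |g.coeff k| ≤ ((d:ℤ)+1) * T := by
  have hT0 : (0:ℤ) ≤ T := le_trans (abs_nonneg _) (hT 0)
  have claim : ∀ j : ℕ, |a| * |g.coeff (d - j)| ≤ ((j:ℤ)+1) * T := by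
    intro j
    induction j with
    | zero =>
      have h := hT (d+1)
      rw [coeff_lin_mul,
        Polynomial.coeff_eq_zero_of_natDegree_lt (show g.natDegree < d + 1 by omega),
        mul_zero, add_zero, abs_mul] at h
      simpa using h
    | succ j ih =>
      rcases le_or_gt d j with hdj | hdj
      · have e1 : d - (j+1) = d - j := by omega
        rw [e1]
        calc |a| * |g.coeff (d - j)| ≤ ((j:ℤ)+1) * T := ih
          _ ≤ ((j:ℤ)+1+1) * T := by nlinarith
          _ = ((((j+1):ℕ):ℤ)+1) * T := by push_cast; ring
      · have e1 : (d - (j+1)) + 1 = d - j := by omega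
        have h := hT (d - (j+1) + 1)
        rw [coeff_lin_mul, e1] at h
        have h2 : |a * g.coeff (d - (j+1))| ≤ T + |b * g.coeff (d - j)| := by
          have e : a * g.coeff (d - (j+1))
              = (a * g.coeff (d - (j+1)) + b * g.coeff (d - j)) + (-(b * g.coeff (d - j))) := by
            ring
          rw [e]
          have h5 := abs_add_le (a * g.coeff (d - (j+1)) + b * g.coeff (d - j))
            (-(b * g.coeff (d - j)))
          rw [abs_neg] at h5
          linarith
        rw [abs_mul, abs_mul] at h2
        have h4 : |b| * |g.coeff (d - j)| ≤ |a| * |g.coeff (d - j)| :=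
          mul_le_mul_of_nonneg_right hab (abs_nonneg _)
        push_cast
        nlinarith
  intro k
  rcases le_or_gt k d with hk | hk
  · have e : k = d - (d - k) := by omega
    rw [e]
    calc |a| * |g.coeff (d - (d-k))| ≤ (((d-k : ℕ):ℤ)+1) * T := claim (d-k)
      _ ≤ ((d:ℤ)+1) * T := by
        apply mul_le_mul_of_nonneg_right _ hT0
        exact_mod_cast by omega
  · rw [Polynomial.coeff_eq_zero_of_natDegree_lt (by omega)]
    simp
    positivity

lemma bound_max (g : Polynomial ℤ) (a b T : ℤ) (d : ℕ) (hd : g.natDegree ≤ d)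
    (hT : ∀ k, |(g * (C a * X + C b)).coeff k| ≤ T) :
    ∀ k, max |a| |b| * |g.coeff k| ≤ ((d:ℤ)+1) * T := by
  rcases le_total |a| |b| with h | h
  · rw [max_eq_right h]; exact bound_b g a b T d hd h hT
  · rw [max_eq_left h]; exact bound_a g a b T d hd h hT

noncomputable def invsq (x : ℤ) : ℝ := 1 / ((max |x| 1 : ℤ) : ℝ)^2

lemma invsq_nonneg (x : ℤ) : 0 ≤ invsq x := by
  rw [invsq]; positivity

lemma invsq_pos_val (N : ℕ) (h : 1 ≤ N) : invsq ((N:ℤ)) = 1/((N:ℝ))^2 := by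
  rw [invsq, show max |(N:ℤ)| 1 = (N:ℤ) by rw [abs_of_nonneg (by positivity)]; omega]
  norm_num

lemma invsq_neg_val (N : ℕ) (h : 1 ≤ N) : invsq (-(N:ℤ)) = 1/((N:ℝ))^2 := by
  rw [invsq, show max |(-(N:ℤ))| 1 = (N:ℤ) by rw [abs_neg, abs_of_nonneg (by positivity)]; omega]
  norm_num

lemma sum_invsq_nat : ∀ N : ℕ, 1 ≤ N →
    ∑ x ∈ Finset.Icc (-(N:ℤ)) N, invsq x ≤ 5 - 2/(N:ℝ) := by
  intro N
  induction N with
  | zero => omega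
  | succ N ih =>
    intro _
    have hdecomp : Finset.Icc (-((N+1:ℕ):ℤ)) ((N+1:ℕ):ℤ) =
        insert (-((N+1:ℕ):ℤ)) (insert (((N+1:ℕ):ℤ)) (Finset.Icc (-(N:ℤ)) N)) := by
      ext x
      simp only [Finset.mem_Icc, Finset.mem_insert]
      push_cast
      omega
    have h1 : (-((N+1:ℕ):ℤ)) ∉ insert (((N+1:ℕ):ℤ)) (Finset.Icc (-(N:ℤ)) N) := by
      simp only [Finset.mem_insert, Finset.mem_Icc]
      push_cast
      omega
    have h2 : (((N+1:ℕ):ℤ)) ∉ Finset.Icc (-(N:ℤ)) N := by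
      simp only [Finset.mem_Icc]; push_cast; omega
    rw [hdecomp, Finset.sum_insert h1, Finset.sum_insert h2,
      invsq_pos_val (N+1) (by omega), invsq_neg_val (N+1) (by omega)]
    rcases Nat.eq_zero_or_pos N with h0 | hpos
    · subst h0
      have : ∑ x ∈ Finset.Icc (-(0:ℕ):ℤ) ((0:ℕ):ℤ), invsq x = 1 := by
        norm_num [invsq]
      rw [this]
      norm_num
    · have hIH := ih hpos
      have hx0 : (0:ℝ) < (N:ℝ) := by exact_mod_cast hpos
      have key0 : (2:ℝ)/((N:ℝ)+1)^2 ≤ 2/(N:ℝ) - 2/((N:ℝ)+1) := by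
        have hrw : (2:ℝ)/(N:ℝ) - 2/((N:ℝ)+1) = 2/((N:ℝ)*((N:ℝ)+1)) := by
          field_simp
          ring
        rw [hrw]
        apply div_le_div_of_nonneg_left (by norm_num) (by positivity)
        nlinarith
      push_cast
      calc 1/((N:ℝ)+1)^2 + (1/((N:ℝ)+1)^2 + ∑ x ∈ Finset.Icc (-(N:ℤ)) (N:ℤ), invsq x)
          = 2/((N:ℝ)+1)^2 + ∑ x ∈ Finset.Icc (-(N:ℤ)) (N:ℤ), invsq x := by ring
        _ ≤ 2/((N:ℝ)+1)^2 + (5 - 2/(N:ℝ)) := by exact add_le_add_right hIH _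
        _ ≤ (2/(N:ℝ) - 2/((N:ℝ)+1)) + (5 - 2/(N:ℝ)) := add_le_add_left key0 _
        _ = 5 - 2/((N:ℝ)+1) := by ring

lemma sum_invsq (T : ℤ) (hT : 1 ≤ T) : ∑ x ∈ Finset.Icc (-T) T, invsq x ≤ 5 := by
  have h := sum_invsq_nat T.toNat (by omega)
  rw [show ((T.toNat : ℕ) : ℤ) = T by omega] at h
  have h2 : 0 ≤ 2/((T.toNat:ℕ):ℝ) := by positivity
  linarith

noncomputable def invcube (ab : ℤ × ℤ) : ℝ := 1 / ((max (max |ab.1| |ab.2|) 1 : ℤ) : ℝ)^3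

lemma invcube_nonneg (ab : ℤ × ℤ) : 0 ≤ invcube ab := by rw [invcube]; positivity

lemma row_bound (s : Finset ℤ) (x : ℤ) :
    ∑ y ∈ s, (if |y| ≤ |x| then 1/((max |x| 1 : ℤ):ℝ)^3 else 0) ≤ 3 * invsq x := by
  classical
  rw [← Finset.sum_filter, Finset.sum_const, nsmul_eq_mul]
  have hsub : s.filter (fun y => |y| ≤ |x|) ⊆ Finset.Icc (-|x|) |x| := by
    intro y hy
    rw [Finset.mem_filter] at hy
    rw [Finset.mem_Icc]
    exact abs_le.mp hy.2
  have hcard : ((s.filter (fun y => |y| ≤ |x|)).card : ℤ) ≤ 2*|x|+1 := by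
    have h1 := Finset.card_le_card hsub
    rw [Int.card_Icc] at h1
    have h2 : (|x| + 1 - (-|x|)) = 2*|x|+1 := by ring
    rw [h2] at h1
    have := abs_nonneg x
    omega
  set M : ℤ := max |x| 1 with hM
  have hM1 : (1:ℤ) ≤ M := le_max_right _ _
  have hMR : (1:ℝ) ≤ (M:ℝ) := by exact_mod_cast hM1
  have h3 : (2*|x|+1 : ℤ) ≤ 3 * M := by
    rcases le_or_gt 1 |x| with h | h
    · rw [hM, max_eq_left h]; omega
    · have : |x| = 0 := by omega
      rw [hM, this]; simp
  have hcard2 : ((s.filter (fun y => |y| ≤ |x|)).card : ℝ) ≤ 3 * (M:ℝ) := by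
    have : ((s.filter (fun y => |y| ≤ |x|)).card : ℤ) ≤ 3 * M := le_trans hcard h3
    exact_mod_cast this
  calc ((s.filter (fun y => |y| ≤ |x|)).card : ℝ) * (1/(M:ℝ)^3)
      ≤ (3*(M:ℝ)) * (1/(M:ℝ)^3) := mul_le_mul_of_nonneg_right hcard2 (by positivity)
    _ = 3 * (1/(M:ℝ)^2) := by
        field_simp
    _ = 3 * invsq x := by rw [invsq]

lemma sum_pairs (T : ℤ) (hT : 1 ≤ T) :
    ∑ ab ∈ (Finset.Icc (-T) T ×ˢ Finset.Icc (-T) T), invcube ab ≤ 30 := by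
  classical
  set s := Finset.Icc (-T) T with hs
  have hptwise : ∀ ab : ℤ × ℤ,
      invcube ab ≤ (if |ab.2| ≤ |ab.1| then 1/((max |ab.1| 1 : ℤ):ℝ)^3 else 0)
        + (if |ab.1| ≤ |ab.2| then 1/((max |ab.2| 1 : ℤ):ℝ)^3 else 0) := by
    rintro ⟨a, b⟩
    rcases le_total |b| |a| with h | h
    · rw [invcube]
      simp only
      rw [max_eq_left h, if_pos h]
      apply le_add_of_nonneg_right
      split
      · positivity
      · exact le_refl 0
    · rw [invcube]
      simp only
      rw [max_eq_right h, if_pos h]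
      apply le_add_of_nonneg_left
      split
      · positivity
      · exact le_refl 0
  have hsplit := Finset.sum_le_sum (fun ab _ => hptwise ab) (s := s ×ˢ s)
  rw [Finset.sum_add_distrib] at hsplit
  have hsum1 : ∑ ab ∈ s ×ˢ s, (if |ab.2| ≤ |ab.1| then 1/((max |ab.1| 1 : ℤ):ℝ)^3 else 0) ≤ 15 := by
    rw [Finset.sum_product]
    have h1 : ∀ a ∈ s, ∑ b ∈ s, (if |b| ≤ |a| then 1/((max |a| 1 : ℤ):ℝ)^3 else 0) ≤ 3 * invsq a :=
      fun a _ => row_bound s a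
    calc ∑ a ∈ s, ∑ b ∈ s, (if |b| ≤ |a| then 1/((max |a| 1 : ℤ):ℝ)^3 else 0)
        ≤ ∑ a ∈ s, 3 * invsq a := Finset.sum_le_sum h1
      _ = 3 * ∑ a ∈ s, invsq a := by rw [Finset.mul_sum]
      _ ≤ 3 * 5 := by
          apply mul_le_mul_of_nonneg_left _ (by norm_num)
          exact sum_invsq T hT
      _ = 15 := by norm_num
  have hsum2 : ∑ ab ∈ s ×ˢ s, (if |ab.1| ≤ |ab.2| then 1/((max |ab.2| 1 : ℤ):ℝ)^3 else 0) ≤ 15 := by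
    rw [Finset.sum_product, Finset.sum_comm]
    have h1 : ∀ b ∈ s, ∑ a ∈ s, (if |a| ≤ |b| then 1/((max |b| 1 : ℤ):ℝ)^3 else 0) ≤ 3 * invsq b :=
      fun b _ => row_bound s b
    calc ∑ b ∈ s, ∑ a ∈ s, (if |a| ≤ |b| then 1/((max |b| 1 : ℤ):ℝ)^3 else 0)
        ≤ ∑ b ∈ s, 3 * invsq b := Finset.sum_le_sum h1
      _ = 3 * ∑ b ∈ s, invsq b := by rw [Finset.mul_sum]
      _ ≤ 3 * 5 := by
          apply mul_le_mul_of_nonneg_left _ (by norm_num)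
          exact sum_invsq T hT
      _ = 15 := by norm_num
  linarith

section Lower
variable (n : ℕ) (f : Fin n → ℕ)

def lcoef (i : Fin n) : ℤ :=
  if (i : ℕ) = n - 1 then 4 * f i + 1 else if (i : ℕ) = 0 then 4 * f i + 2 else 2 * f i + 2

noncomputable def lgen : Polynomial ℤ := ∑ i : Fin n, monomial (i : ℕ) (lcoef n f i)

lemma lgen_coeff (k : ℕ) :
    (lgen n f).coeff k = if h : k < n then lcoef n f ⟨k, h⟩ else 0 := by
  rw [lgen, Polynomial.finset_sum_coeff]
  simp only [Polynomial.coeff_monomial]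
  split
  · next h =>
    rw [Finset.sum_eq_single (⟨k, h⟩ : Fin n)]
    · simp
    · intro b _ hb
      simp only [ite_eq_right_iff]
      intro he; exact absurd (Fin.ext he) hb
    · simp
  · next h =>
    apply Finset.sum_eq_zero
    intro i _
    simp only [ite_eq_right_iff]
    intro he; omega
lemma lgen_natDegree (hn : 1 ≤ n) : (lgen n f).natDegree = n - 1 := by
  apply le_antisymm
  · apply Polynomial.natDegree_le_iff_coeff_eq_zero.mpr
    intro k hk
    rw [lgen_coeff]
    split
    · omega
    · rfl
  · apply Polynomial.le_natDegree_of_ne_zero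
    rw [lgen_coeff]
    rw [dif_pos (by omega)]
    rw [lcoef, if_pos rfl]
    positivity

lemma lgen_ne_zero (hn : 1 ≤ n) : lgen n f ≠ 0 := by
  intro h
  have := lgen_coeff n f (n-1)
  rw [h] at this
  rw [dif_pos (by omega)] at this
  rw [lcoef, if_pos rfl] at this
  simp at this
  omega

lemma content_odd (hn : 1 ≤ n) : ¬ (2 ∣ (lgen n f).content) := by
  intro h2
  have hdvd : (lgen n f).content ∣ (lgen n f).coeff (n-1) := Polynomial.content_dvd_coeff _
  rw [lgen_coeff, dif_pos (by omega), lcoef, if_pos rfl] at hdvd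
  have : (2:ℤ) ∣ 4 * (f ⟨n-1, by omega⟩ : ℤ) + 1 := dvd_trans h2 hdvd
  omega

lemma exists_irred_factor (hn : 3 ≤ n) :
    ∃ g' : Polynomial ℤ, Irreducible g' ∧ g'.natDegree = n - 1 ∧ g' ∣ lgen n f := by
  set g := lgen n f with hg
  set g' := g.primPart with hg'
  have hgne : g ≠ 0 := lgen_ne_zero n f (by omega)
  have hcoeff : ∀ k, g.coeff k = g.content * g'.coeff k := by
    intro k
    conv_lhs => rw [Polynomial.eq_C_content_mul_primPart g]
    rw [Polynomial.coeff_C_mul]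
  have hc2 : ¬ (2:ℤ) ∣ g.content := content_odd n f (by omega)
  have hdeg' : g'.natDegree = n - 1 := by
    rw [hg', Polynomial.natDegree_primPart, lgen_natDegree n f (by omega)]
  have hE : g'.IsEisensteinAt (Ideal.span ({2} : Set ℤ)) := by
    constructor
    · -- leading coeff not in span 2
      rw [Ideal.mem_span_singleton]
      intro hdvd
      rw [Polynomial.leadingCoeff, hdeg'] at hdvd
      have : (2:ℤ) ∣ g.coeff (n-1) := by
        rw [hcoeff]; exact Dvd.dvd.mul_left hdvd _
      rw [lgen_coeff, dif_pos (by omega), lcoef, if_pos rfl] at this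
      omega
    · -- mem
      intro k hk
      rw [hdeg'] at hk
      rw [Ideal.mem_span_singleton]
      have h2g : (2:ℤ) ∣ g.coeff k := by
        rw [lgen_coeff, dif_pos (by omega), lcoef]
        rw [if_neg (by simp only [Fin.val_mk]; omega)]
        split <;> omega
      rw [hcoeff] at h2g
      exact ((Int.prime_two.dvd_mul).mp h2g).resolve_left hc2
    · -- not mem : coeff 0 ∉ span^2
      rw [Ideal.span_singleton_pow, Ideal.mem_span_singleton]
      intro hdvd
      have : (2:ℤ)^2 ∣ g.coeff 0 := by
        rw [hcoeff]; exact Dvd.dvd.mul_left hdvd _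
      rw [lgen_coeff, dif_pos (by omega), lcoef, if_neg (by omega), if_pos rfl] at this
      omega
  refine ⟨g', hE.irreducible ?_ (Polynomial.isPrimitive_primPart g) (by omega), hdeg', g.primPart_dvd⟩
  rw [Ideal.span_singleton_prime (by norm_num)]
  exact Int.prime_two


lemma lp_mem (hn : 3 ≤ n) (t : ℝ) (ht0 : 0 ≤ t)
    (hc : ∀ i : Fin n, (lcoef n f i).natAbs ≤ ⌊t⌋₊) :
    X * lgen n f ∈ Rkn (n-1) n t := by
  have hgne : lgen n f ≠ 0 := lgen_ne_zero n f (by omega)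
  have hdeg : (X * lgen n f).natDegree = n := by
    rw [Polynomial.natDegree_mul Polynomial.X_ne_zero hgne, Polynomial.natDegree_X,
      lgen_natDegree n f (by omega)]
    omega
  refine ⟨⟨hdeg, ?_, ?_⟩, ?_⟩
  · -- height
    have h1 : polyHeight (X * lgen n f) ≤ ⌊t⌋₊ := by
      apply height_le_of_forall
      intro k
      match k with
      | 0 => simp
      | (k+1) =>
        rw [Polynomial.coeff_X_mul]
        rw [lgen_coeff]
        split
        · exact hc _
        · simp
    calc (polyHeight (X * lgen n f) : ℝ) ≤ (⌊t⌋₊ : ℝ) := by exact_mod_cast h1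
      _ ≤ t := Nat.floor_le ht0
  · -- not irreducible
    rw [Polynomial.map_mul, Polynomial.map_X]
    intro hirr
    rcases hirr.isUnit_or_isUnit rfl with h | h
    · exact Polynomial.not_isUnit_X h
    · apply Polynomial.not_isUnit_of_natDegree_pos _ _ h
      rw [Polynomial.natDegree_map_eq_of_injective (RingHom.injective_int (Int.castRingHom ℚ))]
      · rw [lgen_natDegree n f (by omega)]; omega
  · obtain ⟨g', h1, h2, h3⟩ := exists_irred_factor n f hn
    exact ⟨g', h1, h2, h3.mul_left X⟩

lemma lower_main (hn : 3 ≤ n) (t : ℝ) (ht : 8 ≤ t) :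
    (1/8:ℝ)^n * t^n ≤ ((Rkn (n-1) n t).ncard : ℝ) := by
  classical
  set M := ⌊t⌋₊ / 4 with hM
  have ht0 : (0:ℝ) ≤ t := by linarith
  have h4M : 4 * M ≤ ⌊t⌋₊ := by omega
  have hfin : (Rkn (n-1) n t).Finite := Rkn_finite _ _ _
  have hcard : (Fintype.piFinset fun _ : Fin n => Finset.range M).card ≤ hfin.toFinset.card := by
    apply Finset.card_le_card_of_injOn (fun f => X * lgen n f)
    · intro f hf
      rw [Finset.mem_coe, Set.Finite.mem_toFinset]
      apply lp_mem n f hn t ht0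
      intro i
      have hfi : f i < M := by
        have := Fintype.mem_piFinset.mp hf i
        simpa using this
      rw [lcoef]
      split
      · omega
      split <;> omega
    · intro f1 h1 f2 h2 he
      funext i
      have hcc : (X * lgen n f1).coeff (i+1) = (X * lgen n f2).coeff (i+1) := by
        simp only at he; rw [he]
      rw [Polynomial.coeff_X_mul, Polynomial.coeff_X_mul, lgen_coeff, lgen_coeff,
        dif_pos i.isLt, dif_pos i.isLt] at hcc
      simp only [Fin.eta] at hcc
      rw [lcoef, lcoef] at hcc
      split at hcc <;> [skip; split at hcc] <;> omega
  have hpi : (Fintype.piFinset fun _ : Fin n => Finset.range M).card = M ^ n := by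
    rw [Fintype.card_piFinset]
    simp
  have hncard : (Rkn (n-1) n t).ncard = hfin.toFinset.card := Set.ncard_eq_toFinset_card _ hfin
  have hM8 : t / 8 ≤ (M : ℝ) := by
    have h1 : t - 1 < (⌊t⌋₊ : ℝ) := Nat.sub_one_lt_floor t
    have h2 : (⌊t⌋₊ : ℝ) ≤ 4 * (M:ℝ) + 3 := by
      have : ⌊t⌋₊ ≤ 4 * M + 3 := by omega
      exact_mod_cast this
    linarith
  calc (1/8:ℝ)^n * t^n = (t/8)^n := by rw [show t/8 = (1/8)*t by ring, mul_pow]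
    _ ≤ (M:ℝ)^n := pow_le_pow_left₀ (by linarith) hM8 n
    _ = ((M^n : ℕ) : ℝ) := by push_cast; ring
    _ ≤ ((Rkn (n-1) n t).ncard : ℝ) := by
        rw [hncard]
        exact_mod_cast hpi ▸ hcard

end Lower

open scoped Classical in
noncomputable def gsel (d : ℕ) (p : Polynomial ℤ) : Polynomial ℤ :=
  if h : ∃ g : Polynomial ℤ, Irreducible g ∧ g.natDegree = d ∧ g ∣ p then h.choose else 1

lemma gsel_spec {d : ℕ} {p : Polynomial ℤ}
    (h : ∃ g : Polynomial ℤ, Irreducible g ∧ g.natDegree = d ∧ g ∣ p) :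
    Irreducible (gsel d p) ∧ (gsel d p).natDegree = d ∧ gsel d p ∣ p := by
  classical
  rw [gsel]
  rw [dif_pos h]
  exact h.choose_spec

open scoped Classical in
noncomputable def qsel (d : ℕ) (p : Polynomial ℤ) : Polynomial ℤ :=
  if h : gsel d p ∣ p then h.choose else 1

lemma qsel_spec {d : ℕ} {p : Polynomial ℤ} (h : gsel d p ∣ p) :
    p = gsel d p * qsel d p := by
  classical
  rw [qsel]
  rw [dif_pos h]
  exact h.choose_spec

lemma fiber_facts {n : ℕ} (hn : 3 ≤ n) {t : ℝ} {p : Polynomial ℤ}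
    (hp : p ∈ Rkn (n-1) n t) :
    p = gsel (n-1) p * (C ((qsel (n-1) p).coeff 1) * X + C ((qsel (n-1) p).coeff 0)) ∧
    (gsel (n-1) p).natDegree = n - 1 ∧
    (qsel (n-1) p).coeff 1 ≠ 0 ∧
    |(qsel (n-1) p).coeff 1| ≤ (⌊t⌋₊ : ℤ) ∧ |(qsel (n-1) p).coeff 0| ≤ (⌊t⌋₊ : ℤ) := by
  obtain ⟨⟨hdeg, hht, hirr⟩, hex⟩ := hp
  obtain ⟨hgi, hgd, hgdvd⟩ := gsel_spec hex
  set g := gsel (n-1) p with hgdef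
  set q := qsel (n-1) p with hqdef
  have hpq : p = g * q := qsel_spec hgdvd
  have hpne : p ≠ 0 := by
    intro h
    rw [h, Polynomial.natDegree_zero] at hdeg
    omega
  have hgne : g ≠ 0 := hgi.ne_zero
  have hqne : q ≠ 0 := by
    intro h
    exact hpne (by rw [hpq, h, mul_zero])
  have hqdeg : q.natDegree = 1 := by
    have h1 := Polynomial.natDegree_mul hgne hqne
    rw [← hpq, hdeg, hgd] at h1
    omega
  have hqeq : q = C (q.coeff 1) * X + C (q.coeff 0) := by
    apply Polynomial.eq_X_add_C_of_degree_le_one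
    rw [Polynomial.degree_eq_natDegree hqne, hqdeg]
    exact_mod_cast le_rfl
  have hfac : p = g * (C (q.coeff 1) * X + C (q.coeff 0)) := by rw [hpq, ← hqeq]
  have hq1 : q.coeff 1 = q.leadingCoeff := by rw [Polynomial.leadingCoeff, hqdeg]
  have ha : q.coeff 1 ≠ 0 := by
    rw [hq1]
    exact Polynomial.leadingCoeff_ne_zero.mpr hqne
  have haT : |q.coeff 1| ≤ (⌊t⌋₊ : ℤ) := by
    have hlead : p.leadingCoeff = g.leadingCoeff * q.leadingCoeff := by
      rw [hpq, Polynomial.leadingCoeff_mul]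
    have hglead : 1 ≤ |g.leadingCoeff| :=
      Int.one_le_abs (Polynomial.leadingCoeff_ne_zero.mpr hgne)
    have hPn : |p.leadingCoeff| ≤ (⌊t⌋₊ : ℤ) := by
      rw [Polynomial.leadingCoeff, hdeg]
      exact abs_coeff_le p hht n
    calc |q.coeff 1| = |q.leadingCoeff| := by rw [hq1]
      _ ≤ |g.leadingCoeff| * |q.leadingCoeff| :=
          le_mul_of_one_le_left (abs_nonneg _) hglead
      _ = |p.leadingCoeff| := by rw [hlead, abs_mul]
      _ ≤ (⌊t⌋₊ : ℤ) := hPn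
  have hg0 : g.coeff 0 ≠ 0 := by
    intro h0
    obtain ⟨u, hu⟩ := Polynomial.X_dvd_iff.mpr h0
    rcases hgi.isUnit_or_isUnit hu with h | h
    · exact Polynomial.not_isUnit_X h
    · have hune : u ≠ 0 := by
        intro he
        exact hgne (by rw [hu, he, mul_zero])
      have h2 := Polynomial.natDegree_mul (Polynomial.X_ne_zero (R := ℤ)) hune
      rw [← hu, Polynomial.natDegree_X, Polynomial.natDegree_eq_zero_of_isUnit h, hgd] at h2
      omega
  have hbT : |q.coeff 0| ≤ (⌊t⌋₊ : ℤ) := by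
    have hc0 : p.coeff 0 = q.coeff 0 * g.coeff 0 := by
      rw [hfac, coeff_lin_mul_zero]
    have h1 : |p.coeff 0| ≤ (⌊t⌋₊ : ℤ) := abs_coeff_le p hht 0
    have h2 : 1 ≤ |g.coeff 0| := Int.one_le_abs hg0
    calc |q.coeff 0| ≤ |q.coeff 0| * |g.coeff 0| :=
          le_mul_of_one_le_right (abs_nonneg _) h2
      _ = |p.coeff 0| := by rw [hc0, abs_mul]
      _ ≤ (⌊t⌋₊ : ℤ) := h1
  exact ⟨hfac, hgd, ha, haT, hbT⟩

lemma upper_main (n : ℕ) (hn : 3 ≤ n) (t : ℝ) (ht : 1 ≤ t) :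
    ((Rkn (n-1) n t).ncard : ℝ) ≤ (30 * (3*(n:ℝ))^n) * t^n := by
  classical
  set T : ℤ := (⌊t⌋₊ : ℤ) with hTdef
  have hT1 : (1:ℤ) ≤ T := by
    have h : (1:ℕ) ≤ ⌊t⌋₊ := Nat.le_floor (by exact_mod_cast ht)
    rw [hTdef]
    exact_mod_cast h
  have hfin := Rkn_finite (n-1) n t
  set F := hfin.toFinset with hFdef
  set ψ : Polynomial ℤ → ℤ × ℤ :=
    fun p => ((qsel (n-1) p).coeff 1, (qsel (n-1) p).coeff 0) with hψdef
  set D := Finset.Icc (-T) T ×ˢ Finset.Icc (-T) T with hDdef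
  have hmap : ∀ p ∈ F, ψ p ∈ D := by
    intro p hp
    rw [hFdef, Set.Finite.mem_toFinset] at hp
    obtain ⟨_, _, _, h4, h5⟩ := fiber_facts hn hp
    rw [hDdef, Finset.mem_product]
    constructor
    · rw [Finset.mem_Icc]; exact abs_le.mp h4
    · rw [Finset.mem_Icc]; exact abs_le.mp h5
  have hcard := Finset.card_eq_sum_card_fiberwise hmap
  have hfib : ∀ ab ∈ D, (((F.filter fun p => ψ p = ab).card : ℝ)) ≤
      (3*(n:ℝ)*(T:ℝ))^n * invcube ab := by
    intro ab hab
    rcases Finset.eq_empty_or_nonempty (F.filter fun p => ψ p = ab) with he | ⟨p₀, hp₀⟩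
    · rw [he]
      simp only [Finset.card_empty, Nat.cast_zero]
      have : 0 ≤ invcube ab := by rw [invcube]; positivity
      positivity
    · have hp₀f := Finset.mem_filter.mp hp₀
      have hp₀R : p₀ ∈ Rkn (n-1) n t := by
        have := hp₀f.1
        rwa [hFdef, Set.Finite.mem_toFinset] at this
      obtain ⟨_, _, ha0, haT0, hbT0⟩ := fiber_facts hn hp₀R
      have hψ0 : ψ p₀ = ab := hp₀f.2
      have hab1 : ab.1 = (qsel (n-1) p₀).coeff 1 := by rw [← hψ0]
      have hab2 : ab.2 = (qsel (n-1) p₀).coeff 0 := by rw [← hψ0]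
      set m : ℤ := max |ab.1| |ab.2| with hmdef
      have hm1 : (1:ℤ) ≤ m := by
        refine le_trans (Int.one_le_abs ?_) (le_max_left _ _)
        rw [hab1]; exact ha0
      have hmpos : (0:ℤ) < m := by omega
      have hmT : m ≤ T := by
        apply max_le
        · rw [hab1]; exact haT0
        · rw [hab2]; exact hbT0
      set B : ℤ := ((n:ℤ) * T) / m with hBdef
      have hB0 : (0:ℤ) ≤ B := Int.ediv_nonneg (by positivity) (by omega)
      have hB1 : (1:ℤ) ≤ B := by
        rw [hBdef, Int.le_ediv_iff_mul_le hmpos]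
        have hn3 : (3:ℤ) ≤ (n:ℤ) := by exact_mod_cast hn
        nlinarith
      have hBm : B * m ≤ (n:ℤ) * T := Int.ediv_mul_le _ (by omega)
      have hinj : (F.filter fun p => ψ p = ab).card ≤
          (Fintype.piFinset fun _ : Fin n => Finset.Icc (-B) B).card := by
        apply Finset.card_le_card_of_injOn
          (fun p => fun i : Fin n => (gsel (n-1) p).coeff i)
        · intro p hp
          have hpf := Finset.mem_filter.mp hp
          have hpR : p ∈ Rkn (n-1) n t := by
            have := hpf.1
            rwa [hFdef, Set.Finite.mem_toFinset] at this
          obtain ⟨hfacp, hgdp, _, _, _⟩ := fiber_facts hn hpR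
          have hhtp : (polyHeight p : ℝ) ≤ t := hpR.1.2.1
          have hTb : ∀ k, |(gsel (n-1) p * (C ((qsel (n-1) p).coeff 1) * X +
              C ((qsel (n-1) p).coeff 0))).coeff k| ≤ T := by
            intro k
            rw [← hfacp]
            exact abs_coeff_le p hhtp k
          have hbm := bound_max (gsel (n-1) p) ((qsel (n-1) p).coeff 1)
            ((qsel (n-1) p).coeff 0) T (n-1) (le_of_eq hgdp) hTb
          have hψp : ψ p = ab := hpf.2
          have hmm : max |(qsel (n-1) p).coeff 1| |(qsel (n-1) p).coeff 0| = m := by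
            rw [hmdef, ← hψp]
          rw [Finset.mem_coe, Fintype.mem_piFinset]
          intro i
          rw [Finset.mem_Icc, ← abs_le, hBdef,
            Int.le_ediv_iff_mul_le hmpos]
          have h1 := hbm i
          rw [hmm] at h1
          have hd1 : (((n-1:ℕ):ℤ)+1) = (n:ℤ) := by omega
          rw [hd1] at h1
          calc |(gsel (n-1) p).coeff i| * m = m * |(gsel (n-1) p).coeff i| := mul_comm _ _
            _ ≤ (n:ℤ) * T := h1
        · intro p1 hp1 p2 hp2 he
          simp only [Finset.coe_filter, Set.mem_setOf_eq] at hp1 hp2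
          have hp1R : p1 ∈ Rkn (n-1) n t := by
            have := hp1.1
            rwa [hFdef, Set.Finite.mem_toFinset] at this
          have hp2R : p2 ∈ Rkn (n-1) n t := by
            have := hp2.1
            rwa [hFdef, Set.Finite.mem_toFinset] at this
          obtain ⟨hfac1, hgd1, _, _, _⟩ := fiber_facts hn hp1R
          obtain ⟨hfac2, hgd2, _, _, _⟩ := fiber_facts hn hp2R
          have hgeq : gsel (n-1) p1 = gsel (n-1) p2 := by
            apply Polynomial.ext
            intro k
            rcases lt_or_ge k n with hk | hk
            · exact congrFun he ⟨k, hk⟩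
            · rw [Polynomial.coeff_eq_zero_of_natDegree_lt (by omega),
                Polynomial.coeff_eq_zero_of_natDegree_lt (by omega)]
          have hq1 : (qsel (n-1) p1).coeff 1 = (qsel (n-1) p2).coeff 1 := by
            have e1 : ψ p1 = ab := hp1.2
            have e2 : ψ p2 = ab := hp2.2
            have := e1.trans e2.symm
            exact congrArg Prod.fst this
          have hq0 : (qsel (n-1) p1).coeff 0 = (qsel (n-1) p2).coeff 0 := by
            have e1 : ψ p1 = ab := hp1.2
            have e2 : ψ p2 = ab := hp2.2
            have := e1.trans e2.symm
            exact congrArg Prod.snd this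
          rw [hfac1, hfac2, hgeq, hq1, hq0]
      have hpc : (Fintype.piFinset fun _ : Fin n => Finset.Icc (-B) B).card =
          ((2*B+1).toNat)^n := by
        rw [Fintype.card_piFinset]
        have h1 : (Finset.Icc (-B) B).card = (2*B+1).toNat := by
          rw [Int.card_Icc]
          congr 1
          ring
        simp [h1]
      have hcast : (((2*B+1).toNat : ℕ) : ℝ) = 2*(B:ℝ)+1 := by
        have : ((2*B+1).toNat : ℤ) = 2*B+1 := Int.toNat_of_nonneg (by omega)
        exact_mod_cast this
      have hmcube : ((max (max |ab.1| |ab.2|) 1 : ℤ) : ℝ) = (m:ℝ) := by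
        rw [hmdef]
        congr 1
        omega
      have hm1R : (1:ℝ) ≤ (m:ℝ) := by exact_mod_cast hm1
      have hmposR : (0:ℝ) < (m:ℝ) := by linarith
      have hBR : (B:ℝ) ≤ (n:ℝ)*(T:ℝ)/(m:ℝ) := by
        rw [le_div_iff₀ hmposR]
        exact_mod_cast hBm
      have hTposR : (0:ℝ) < (T:ℝ) := by exact_mod_cast hT1.trans_lt' zero_lt_one
      have hnposR : (0:ℝ) < (n:ℝ) := by exact_mod_cast (by omega : 0 < n)
      have hB1R : (1:ℝ) ≤ (B:ℝ) := by exact_mod_cast hB1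
      calc (((F.filter fun p => ψ p = ab).card : ℕ) : ℝ)
          ≤ (((Fintype.piFinset fun _ : Fin n => Finset.Icc (-B) B).card : ℕ) : ℝ) := by
            exact_mod_cast hinj
        _ = (2*(B:ℝ)+1)^n := by rw [hpc]; push_cast [hcast]; ring
        _ ≤ (3*(B:ℝ))^n := by
            apply pow_le_pow_left₀ (by linarith) (by linarith)
        _ ≤ ((3:ℝ)*((n:ℝ)*(T:ℝ)/(m:ℝ)))^n := by
            apply pow_le_pow_left₀ (by linarith) (by linarith)
        _ = (3*(n:ℝ)*(T:ℝ))^n / (m:ℝ)^n := by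
            rw [mul_div_assoc', div_pow]
            ring_nf
        _ ≤ (3*(n:ℝ)*(T:ℝ))^n / (m:ℝ)^3 := by
            apply div_le_div_of_nonneg_left (by positivity) (by positivity)
            exact pow_le_pow_right₀ hm1R hn
        _ = (3*(n:ℝ)*(T:ℝ))^n * invcube ab := by
            rw [invcube, hmcube]
            ring
  have hnn : (0:ℝ) ≤ 3*(n:ℝ) := by positivity
  have hTR : (0:ℝ) ≤ (T:ℝ) := by exact_mod_cast (by omega : (0:ℤ) ≤ T)
  have hsum : (F.card : ℝ) ≤ (3*(n:ℝ)*(T:ℝ))^n * 30 := by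
    rw [hcard]
    push_cast
    calc ∑ ab ∈ D, ((Finset.filter (fun a => ψ a = ab) F).card : ℝ)
        ≤ ∑ ab ∈ D, (3*(n:ℝ)*(T:ℝ))^n * invcube ab := Finset.sum_le_sum hfib
      _ = (3*(n:ℝ)*(T:ℝ))^n * ∑ ab ∈ D, invcube ab := by rw [Finset.mul_sum]
      _ ≤ (3*(n:ℝ)*(T:ℝ))^n * 30 := by
          apply mul_le_mul_of_nonneg_left _ (by positivity)
          rw [hDdef]
          exact sum_pairs T hT1
  have hncard : ((Rkn (n-1) n t).ncard : ℝ) = (F.card : ℝ) := by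
    rw [Set.ncard_eq_toFinset_card _ hfin]
  have hTt : (T:ℝ) ≤ t := by
    rw [hTdef]
    push_cast
    exact Nat.floor_le (by linarith)
  rw [hncard]
  calc (F.card:ℝ) ≤ (3*(n:ℝ)*(T:ℝ))^n * 30 := hsum
    _ ≤ (3*(n:ℝ)*t)^n * 30 := by
        apply mul_le_mul_of_nonneg_right _ (by norm_num)
        apply pow_le_pow_left₀ (mul_nonneg hnn hTR)
        have := mul_le_mul_of_nonneg_left hTt hnn
        linarith
    _ = 30 * (3*(n:ℝ))^n * t^n := by rw [mul_pow]; ring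

/-- For every `n ≥ 3`, as `t → ∞`, `|R_{n-1,n}(t)| ≍ t^n`. -/
theorem stmt4 :
    ∀ n : ℕ, 3 ≤ n →
      ∃ c C : ℝ, 0 < c ∧ 0 < C ∧ ∃ t₀ : ℝ, ∀ t : ℝ, t₀ ≤ t →
        c * t ^ n ≤ ((Rkn (n - 1) n t).ncard : ℝ) ∧
        ((Rkn (n - 1) n t).ncard : ℝ) ≤ C * t ^ n := by
  intro n hn
  have hn0 : (0:ℝ) < (n:ℝ) := by exact_mod_cast (by omega : 0 < n)
  refine ⟨(1/8:ℝ)^n, 30*(3*(n:ℝ))^n, by positivity,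
    mul_pos (by norm_num) (pow_pos (by linarith) n), 8, fun t ht => ?_⟩
  exact ⟨lower_main n hn t ht, upper_main n hn t (by linarith)⟩
end

section
/- For every fixed integer n ≥ 2, as T → ∞ one has T²(log T)^{n−1} ≪ ∑_{(x_1,...,x_n) ∈ G_n(T)} φ(x_1)·φ(x_2)···φ(x_n), where the sum is over all lattice points G_n(T) = {(x_1,...,x_n) ∈ ℤ^n : x_i ≥ 1 for all i, x_1···x_n ≤ T}. -/
open Finset Real

lemma L1 (b : ℕ) : #{a ∈ Finset.Icc 1 b | Nat.Coprime a b} = b.totient := by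
  rw [← Nat.filter_coprime_Ico_eq_totient b 1]
  rw [Nat.add_comm, Finset.Ico_add_one_right_eq_Icc]
  congr 1; ext a; simp [Nat.coprime_comm]

lemma L2 (M : ℕ) :
    #{p ∈ Finset.Icc 1 M ×ˢ Finset.Icc 1 M | p.1 ≤ p.2 ∧ Nat.Coprime p.1 p.2}
      = ∑ b ∈ Finset.Icc 1 M, b.totient := by
  rw [Finset.card_eq_sum_card_fiberwise (f := Prod.snd)
    (t := Finset.Icc 1 M) (fun p hp => (Finset.mem_filter.1 hp).1 |> Finset.mem_product.1 |>.2)]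
  refine Finset.sum_congr rfl fun b hb => ?_
  rw [← L1 b]
  apply Finset.card_nbij' (fun p => p.1) (fun a => (a, b))
  · intro p hp
    simp only [Finset.mem_coe, Finset.mem_filter, Finset.mem_product, Finset.mem_Icc] at hp ⊢
    obtain ⟨⟨⟨⟨h1, h2⟩, h3⟩, hle, hcop⟩, hsnd⟩ := hp
    subst hsnd
    exact ⟨⟨h1, hle⟩, hcop⟩
  · intro a ha
    simp only [Finset.mem_coe, Finset.mem_filter, Finset.mem_product, Finset.mem_Icc] at ha ⊢
    simp only [Finset.mem_Icc] at hb
    exact ⟨⟨⟨⟨ha.1.1, ha.1.2.trans hb.2⟩, hb⟩, ha.1.2, ha.2⟩, trivial⟩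
  · intro p hp
    simp only [Finset.mem_coe, Finset.mem_filter] at hp
    exact Prod.ext rfl hp.2.symm
  · intro a _
    rfl

lemma L3 (M : ℕ) :
    #{p ∈ Finset.Icc 1 M ×ˢ Finset.Icc 1 M | Nat.Coprime p.1 p.2}
      ≤ 2 * #{p ∈ Finset.Icc 1 M ×ˢ Finset.Icc 1 M | p.1 ≤ p.2 ∧ Nat.Coprime p.1 p.2} := by
  set D := {p ∈ Finset.Icc 1 M ×ˢ Finset.Icc 1 M | p.1 ≤ p.2 ∧ Nat.Coprime p.1 p.2} with hD
  have hsub : {p ∈ Finset.Icc 1 M ×ˢ Finset.Icc 1 M | Nat.Coprime p.1 p.2}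
      ⊆ D ∪ D.image Prod.swap := by
    intro p hp
    simp only [Finset.mem_filter, Finset.mem_product, Finset.mem_Icc] at hp
    rcases le_total p.1 p.2 with h | h
    · apply Finset.mem_union_left
      simp only [hD, Finset.mem_filter, Finset.mem_product]
      exact ⟨⟨Finset.mem_Icc.2 hp.1.1, Finset.mem_Icc.2 hp.1.2⟩, h, hp.2⟩
    · apply Finset.mem_union_right
      refine Finset.mem_image.2 ⟨(p.2, p.1), ?_, rfl⟩
      simp only [hD, Finset.mem_filter, Finset.mem_product, Finset.mem_Icc]
      exact ⟨⟨hp.1.2, hp.1.1⟩, h, (hp.2).symm⟩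
  calc _ ≤ (D ∪ D.image Prod.swap).card := Finset.card_le_card hsub
    _ ≤ D.card + (D.image Prod.swap).card := Finset.card_union_le _ _
    _ ≤ D.card + D.card := by have := Finset.card_image_le (s := D) (f := Prod.swap); omega
    _ = 2 * D.card := (two_mul _).symm

lemma LZ (M : ℕ) : ∑ g ∈ Finset.Icc 2 M, (1 : ℝ) / (g : ℝ) ^ 2 ≤ 13 / 20 := by
  have hsummable : Summable (fun n : ℕ => (1 : ℝ) / (n : ℝ) ^ 2) := hasSum_zeta_two.summable
  have h1 : ∑ g ∈ insert 1 (Finset.Icc 2 M), (1 : ℝ) / (g : ℝ) ^ 2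
      ≤ π ^ 2 / 6 := by
    rw [← hasSum_zeta_two.tsum_eq]
    exact Summable.sum_le_tsum _ (fun i _ => by positivity) hsummable
  rw [Finset.sum_insert (by simp)] at h1
  have hpi : π ^ 2 ≤ 9.9 := by
    nlinarith [Real.pi_lt_d6, Real.pi_pos]
  norm_num at h1 ⊢
  nlinarith

lemma L4 (M : ℕ) : (7 : ℝ) / 20 * (M : ℝ) ^ 2
    ≤ #{p ∈ Finset.Icc 1 M ×ˢ Finset.Icc 1 M | Nat.Coprime p.1 p.2} := by
  set P := Finset.Icc 1 M ×ˢ Finset.Icc 1 M with hP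
  have hcard : P.card = M ^ 2 := by
    simp [hP, Nat.card_Icc, sq]
  have hsplit : #{p ∈ P | Nat.Coprime p.1 p.2} + #{p ∈ P | ¬ Nat.Coprime p.1 p.2} = M ^ 2 := by
    rw [Finset.card_filter_add_card_filter_not, hcard]
  -- bound the non-coprime count
  have hsub : {p ∈ P | ¬ Nat.Coprime p.1 p.2} ⊆
      (Finset.Icc 2 M).biUnion (fun g => {a ∈ Finset.Icc 1 M | g ∣ a} ×ˢ {a ∈ Finset.Icc 1 M | g ∣ a}) := by
    intro p hp
    simp only [Finset.mem_filter, hP, Finset.mem_product, Finset.mem_Icc] at hp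
    obtain ⟨⟨⟨h11, h12⟩, h21, h22⟩, hnc⟩ := hp
    refine Finset.mem_biUnion.2 ⟨Nat.gcd p.1 p.2, ?_, ?_⟩
    · simp only [Finset.mem_Icc]
      constructor
      · rcases Nat.lt_or_ge (Nat.gcd p.1 p.2) 2 with h | h
        · interval_cases h' : Nat.gcd p.1 p.2
          · exact absurd (Nat.eq_zero_of_gcd_eq_zero_left h') (by omega)
          · exact absurd h' hnc
        · exact h
      · exact le_trans (Nat.le_of_dvd (by omega) (Nat.gcd_dvd_left _ _)) h12
    · simp only [Finset.mem_product, Finset.mem_filter, Finset.mem_Icc]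
      exact ⟨⟨⟨h11, h12⟩, Nat.gcd_dvd_left _ _⟩, ⟨h21, h22⟩, Nat.gcd_dvd_right _ _⟩
  have hdvdcard : ∀ g : ℕ, #{a ∈ Finset.Icc 1 M | g ∣ a} = M / g := by
    intro g
    rw [← Nat.Ioc_filter_dvd_card_eq_div]
    congr 1
  have hNC : (#{p ∈ P | ¬ Nat.Coprime p.1 p.2} : ℝ) ≤ 13 / 20 * (M : ℝ) ^ 2 := by
    calc (#{p ∈ P | ¬ Nat.Coprime p.1 p.2} : ℝ)
        ≤ ((Finset.Icc 2 M).biUnion (fun g => {a ∈ Finset.Icc 1 M | g ∣ a} ×ˢ {a ∈ Finset.Icc 1 M | g ∣ a})).card := by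
          exact_mod_cast Nat.cast_le.2 (Finset.card_le_card hsub)
      _ ≤ ∑ g ∈ Finset.Icc 2 M, (({a ∈ Finset.Icc 1 M | g ∣ a} ×ˢ {a ∈ Finset.Icc 1 M | g ∣ a}).card : ℝ) := by
          exact_mod_cast Nat.cast_le.2 (Finset.card_biUnion_le)
      _ ≤ ∑ g ∈ Finset.Icc 2 M, (M : ℝ) ^ 2 / (g : ℝ) ^ 2 := by
          refine Finset.sum_le_sum fun g hg => ?_
          simp only [Finset.mem_Icc] at hg
          rw [Finset.card_product, hdvdcard]
          have h1 : ((M / g : ℕ) : ℝ) ≤ (M : ℝ) / (g : ℝ) := Nat.cast_div_le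
          have hg0 : (0 : ℝ) < g := by have : 2 ≤ g := hg.1; exact_mod_cast Nat.lt_of_lt_of_le Nat.zero_lt_two this
          push_cast
          calc ((M / g : ℕ) : ℝ) * ((M / g : ℕ) : ℝ) ≤ ((M:ℝ)/g) * ((M:ℝ)/g) := by
                apply mul_le_mul h1 h1 (by positivity) (by positivity)
            _ = (M : ℝ)^2 / (g:ℝ)^2 := by ring
      _ = (M : ℝ) ^ 2 * ∑ g ∈ Finset.Icc 2 M, 1 / (g : ℝ) ^ 2 := by
          rw [Finset.mul_sum]; congr 1; ext g; ring
      _ ≤ (M : ℝ) ^ 2 * (13 / 20) := by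
          apply mul_le_mul_of_nonneg_left (LZ M) (by positivity)
      _ = 13 / 20 * (M : ℝ) ^ 2 := by ring
  have := hsplit
  have h2 : ((M : ℝ)) ^ 2 = (#{p ∈ P | Nat.Coprime p.1 p.2} : ℝ) + (#{p ∈ P | ¬ Nat.Coprime p.1 p.2} : ℝ) := by
    exact_mod_cast congrArg (Nat.cast (R := ℝ)) hsplit.symm
  linarith

lemma L5 (M : ℕ) : (7 : ℝ) / 40 * (M : ℝ) ^ 2 ≤ ∑ b ∈ Finset.Icc 1 M, (b.totient : ℝ) := by
  have h3 := L3 M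
  have h4 := L4 M
  rw [L2 M] at h3
  have h3' : (#{p ∈ Finset.Icc 1 M ×ˢ Finset.Icc 1 M | Nat.Coprime p.1 p.2} : ℝ)
      ≤ 2 * ∑ b ∈ Finset.Icc 1 M, (b.totient : ℝ) := by
    push_cast [← Nat.cast_sum]
    exact_mod_cast h3
  linarith

lemma L6' (M : ℕ) : ∑ b ∈ Finset.Icc 1 M, (b : ℝ) = ((M : ℝ) ^ 2 + M) / 2 := by
  induction M with
  | zero => simp
  | succ m ih =>
    rw [Finset.sum_Icc_succ_top (by omega), ih]; push_cast; ring

lemma L6 (M : ℕ) : ∑ b ∈ Finset.Icc 1 M, (b.totient : ℝ) ≤ ((M : ℝ) ^ 2 + M) / 2 := by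
  have h1 : ∑ b ∈ Finset.Icc 1 M, (b.totient : ℝ) ≤ ∑ b ∈ Finset.Icc 1 M, (b : ℝ) :=
    Finset.sum_le_sum fun b _ => by exact_mod_cast Nat.totient_le b
  rw [L6' M] at h1; exact h1

lemma L7 (N : ℕ) (hN : 5 ≤ N) :
    (N : ℝ) ^ 2 / 10 ≤ ∑ b ∈ Finset.Ioc N (2 * N), (b.totient : ℝ) := by
  have hsplit : ∑ b ∈ Finset.Ioc 0 N, (b.totient : ℝ) + ∑ b ∈ Finset.Ioc N (2*N), (b.totient : ℝ)
      = ∑ b ∈ Finset.Ioc 0 (2*N), (b.totient : ℝ) :=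
    Finset.sum_Ioc_consecutive _ (Nat.zero_le N) (by omega)
  have e1 : Finset.Ioc 0 N = Finset.Icc 1 N := rfl
  have e2 : Finset.Ioc 0 (2*N) = Finset.Icc 1 (2*N) := rfl
  rw [e1, e2] at hsplit
  have h5 := L5 (2 * N)
  have h6 := L6 N
  have hN' : (5 : ℝ) ≤ N := by exact_mod_cast hN
  push_cast at h5
  nlinarith

lemma L8 : ∀ J : ℕ, 3 ≤ J →
    ((J : ℝ) - 3) / 40 ≤ ∑ x ∈ Finset.Icc 1 (2 ^ J : ℕ), (x.totient : ℝ) / (x : ℝ) ^ 2 := by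
  intro J hJ
  induction J, hJ using Nat.le_induction with
  | base =>
    have : ((3:ℕ) : ℝ) - 3 = 0 := by norm_num
    rw [this, zero_div]
    exact Finset.sum_nonneg fun x _ => by positivity
  | succ J hJ ih =>
    have hsplit : ∑ x ∈ Finset.Ioc 0 (2^J : ℕ), (x.totient : ℝ)/(x:ℝ)^2
        + ∑ x ∈ Finset.Ioc (2^J : ℕ) (2^(J+1) : ℕ), (x.totient : ℝ)/(x:ℝ)^2
        = ∑ x ∈ Finset.Ioc 0 (2^(J+1) : ℕ), (x.totient : ℝ)/(x:ℝ)^2 :=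
      Finset.sum_Ioc_consecutive _ (Nat.zero_le _) (Nat.pow_le_pow_right (by norm_num) (by omega))
    have e1 : ∀ m : ℕ, Finset.Ioc 0 m = Finset.Icc 1 m := fun m => rfl
    rw [e1, e1] at hsplit
    set N := (2:ℕ)^J with hNdef
    have hN5 : 5 ≤ N := by
      calc (5:ℕ) ≤ 2^3 := by norm_num
        _ ≤ 2^J := Nat.pow_le_pow_right (by norm_num) hJ
    have h2N : (2:ℕ)^(J+1) = 2 * N := by rw [hNdef]; ring
    have hNR : (0:ℝ) < (N:ℝ) := by positivity
    have hblock : (1 : ℝ) / 40 ≤ ∑ x ∈ Finset.Ioc N (2*N), (x.totient : ℝ)/(x:ℝ)^2 := by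
      have h7 := L7 N hN5
      have hterm : ∀ x ∈ Finset.Ioc N (2*N),
          (x.totient : ℝ) / ((2*N:ℕ):ℝ)^2 ≤ (x.totient : ℝ)/(x:ℝ)^2 := by
        intro x hx
        simp only [Finset.mem_Ioc] at hx
        apply div_le_div_of_nonneg_left (by positivity) ?_ ?_
        · have hx0 : 0 < x := by omega
          positivity
        · have : (x : ℝ) ≤ ((2*N:ℕ):ℝ) := by exact_mod_cast hx.2
          have hx0 : (0:ℝ) < x := by exact_mod_cast Nat.lt_of_lt_of_le (by omega) hx.1.le
          nlinarith
      calc (1:ℝ)/40 ≤ ((N:ℝ)^2/10) / ((2*N:ℕ):ℝ)^2 := by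
            push_cast
            rw [le_div_iff₀ (by positivity)]
            nlinarith
        _ ≤ (∑ x ∈ Finset.Ioc N (2*N), (x.totient : ℝ)) / ((2*N:ℕ):ℝ)^2 := by
            apply div_le_div_of_nonneg_right h7 (by positivity)
        _ = ∑ x ∈ Finset.Ioc N (2*N), (x.totient : ℝ) / ((2*N:ℕ):ℝ)^2 := Finset.sum_div _ _ _
        _ ≤ _ := Finset.sum_le_sum hterm
    rw [← h2N] at hblock
    have : ((↑(J+1):ℝ) - 3)/40 = ((J:ℝ)-3)/40 + 1/40 := by push_cast; ring
    rw [this, ← hsplit]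
    exact add_le_add ih hblock

lemma L9 (K : ℕ) (hK : 256 ≤ K) :
    Real.log K / 56 ≤ ∑ x ∈ Finset.Icc 1 K, (x.totient : ℝ) / (x : ℝ) ^ 2 := by
  set J := Nat.log 2 K with hJdef
  have hJ8 : 8 ≤ J := by
    have : (2:ℕ)^8 ≤ K := by norm_num; omega
    exact (Nat.le_log_iff_pow_le (by norm_num) (by omega)).2 this
  have hpow : (2:ℕ)^J ≤ K := Nat.pow_log_le_self 2 (by omega)
  have hlt : K < 2^(J+1) := Nat.lt_pow_succ_log_self (by norm_num) K
  have h8 := L8 J (by omega)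
  have hmono : ∑ x ∈ Finset.Icc 1 (2^J : ℕ), (x.totient : ℝ) / (x : ℝ) ^ 2
      ≤ ∑ x ∈ Finset.Icc 1 K, (x.totient : ℝ) / (x : ℝ) ^ 2 :=
    Finset.sum_le_sum_of_subset_of_nonneg (Finset.Icc_subset_Icc_right hpow)
      (fun x _ _ => by positivity)
  have hlog : Real.log K ≤ ((J:ℝ)+1) * Real.log 2 := by
    calc Real.log K ≤ Real.log ((2:ℝ)^(J+1)) := by
          apply Real.log_le_log (by positivity)
          exact_mod_cast hlt.le
      _ = ((J:ℝ)+1) * Real.log 2 := by rw [Real.log_pow]; push_cast; ring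
  have hlog2 : Real.log 2 ≤ 0.7 := by
    have := Real.log_two_lt_d9
    linarith
  have hJR : (8:ℝ) ≤ (J:ℝ) := by exact_mod_cast hJ8
  have hfinal : Real.log K / 56 ≤ ((J:ℝ) - 3)/40 := by
    have h1 : Real.log K ≤ ((J:ℝ)+1) * 0.7 := by
      calc Real.log K ≤ ((J:ℝ)+1) * Real.log 2 := hlog
        _ ≤ ((J:ℝ)+1) * 0.7 := by nlinarith [Real.log_nonneg (by norm_num : (1:ℝ) ≤ 2)]
    nlinarith
  linarith

noncomputable def Gn (n : ℕ) (T : ℝ) : Finset (Fin n → ℕ) :=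
  (Fintype.piFinset fun _ => Finset.Icc 1 ⌊T⌋₊).filter
    fun x => ((∏ i, x i : ℕ) : ℝ) ≤ T

set_option maxHeartbeats 1000000 in
/-- For every fixed `n ≥ 2`, as `T → ∞`,
`T² (log T)^{n−1} ≪ ∑_{(x_1,...,x_n) ∈ G_n(T)} φ(x_1) ⋯ φ(x_n)`. -/
theorem stmt16 (n : ℕ) (hn : 2 ≤ n) :
    ∃ c : ℝ, 0 < c ∧ ∃ T₀ : ℝ, ∀ T : ℝ, T₀ ≤ T →
      c * T ^ 2 * Real.log T ^ (n - 1)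
        ≤ ∑ x ∈ Gn n T, ∏ i, (Nat.totient (x i) : ℝ) := by
  obtain ⟨m, rfl⟩ : ∃ m, n = m + 1 := ⟨n - 1, by omega⟩
  have hm : 1 ≤ m := by omega
  have hmR : (1 : ℝ) ≤ m := by exact_mod_cast hm
  have hm0 : ((m:ℝ)) ≠ 0 := by positivity
  refine ⟨7 / 160 * (1 / (224 * m)) ^ m, by positivity, (257 : ℝ) ^ (2 * m), ?_⟩
  intro T hT
  have h257 : (1 : ℝ) ≤ 257 := by norm_num
  have hT257 : (257 : ℝ) ≤ T := by
    calc (257 : ℝ) = 257 ^ 1 := (pow_one _).symm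
      _ ≤ 257 ^ (2 * m) := pow_le_pow_right₀ h257 (by omega)
      _ ≤ T := hT
  have hT1 : (1 : ℝ) ≤ T := by linarith
  have hT0 : (0 : ℝ) < T := by linarith
  set e : ℝ := 1 / (2 * m) with he
  have he0 : 0 < e := by positivity
  have he1 : e ≤ 1 := by
    rw [he, div_le_one (by positivity)]; linarith
  set K : ℕ := ⌊T ^ e⌋₊ with hKdef
  have hTe1 : (257 : ℝ) ≤ T ^ e := by
    calc (257 : ℝ) = ((257:ℝ) ^ (2*m : ℕ)) ^ e := by
          rw [← Real.rpow_natCast (257:ℝ) (2*m), ← Real.rpow_mul (by norm_num)]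
          have h1 : ((2*m:ℕ):ℝ) * e = 1 := by
            rw [he]; push_cast; field_simp
          rw [h1, Real.rpow_one]
      _ ≤ T ^ e := Real.rpow_le_rpow (by positivity) hT he0.le
  have hK256 : 256 ≤ K := by
    have h1 : (256 : ℕ) ≤ ⌊(257:ℝ)⌋₊ := by norm_num
    calc (256:ℕ) ≤ ⌊(257:ℝ)⌋₊ := h1
      _ ≤ K := Nat.floor_le_floor hTe1
  have hK1 : 1 ≤ K := by omega
  have hKle : (K : ℝ) ≤ T ^ e := Nat.floor_le (by positivity)
  have hKm : (K : ℝ) ^ m ≤ T ^ ((1:ℝ)/2) := by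
    calc (K : ℝ) ^ m ≤ (T ^ e) ^ m := pow_le_pow_left₀ (by positivity) hKle m
      _ = T ^ (e * m) := by
          rw [← Real.rpow_natCast (T ^ e) m, ← Real.rpow_mul hT0.le]
      _ = T ^ ((1:ℝ)/2) := by
          congr 1
          rw [he]; field_simp
  have hsqrt2 : (2 : ℝ) ≤ T ^ ((1:ℝ)/2) := by
    have h4 : (4:ℝ) ≤ T := by linarith
    calc (2:ℝ) = (4:ℝ) ^ ((1:ℝ)/2) := by
          rw [show (4:ℝ) = 2^(2:ℕ) by norm_num, ← Real.rpow_natCast (2:ℝ) 2,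
            ← Real.rpow_mul (by norm_num)]
          norm_num
      _ ≤ T ^ ((1:ℝ)/2) := Real.rpow_le_rpow (by norm_num) h4 (by norm_num)
  have hsqrtT : T ^ ((1:ℝ)/2) ≤ T := by
    calc T ^ ((1:ℝ)/2) ≤ T ^ (1:ℝ) := Real.rpow_le_rpow_of_exponent_le hT1 (by norm_num)
      _ = T := Real.rpow_one T
  classical
  set Mv : (Fin m → ℕ) → ℕ := fun x' => ⌊T / ((∏ i, x' i : ℕ) : ℝ)⌋₊ with hMv
  set pif : Finset (Fin m → ℕ) := Fintype.piFinset fun _ => Finset.Icc 1 K with hpif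
  set S : Finset ((_ : Fin m → ℕ) × ℕ) := pif.sigma fun x' => Finset.Icc 1 (Mv x') with hS
  have hpif_mem : ∀ x' ∈ pif, ∀ i, 1 ≤ x' i ∧ x' i ≤ K := by
    intro x' hx' i
    have := Fintype.mem_piFinset.1 hx' i
    simpa [Finset.mem_Icc] using this
  have hPfacts : ∀ x' ∈ pif, 1 ≤ ∏ i, x' i ∧ ((∏ i, x' i : ℕ) : ℝ) ≤ T ^ ((1:ℝ)/2) := by
    intro x' hx'
    constructor
    · exact Finset.one_le_prod' fun i _ => (hpif_mem x' hx' i).1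
    · calc ((∏ i, x' i : ℕ) : ℝ) = ∏ i, ((x' i : ℕ) : ℝ) := by push_cast; rfl
        _ ≤ ∏ _i : Fin m, (K : ℝ) := by
            apply Finset.prod_le_prod (fun i _ => by positivity)
            exact fun i _ => by exact_mod_cast (hpif_mem x' hx' i).2
        _ = (K : ℝ) ^ m := by rw [Finset.prod_const]; simp
        _ ≤ T ^ ((1:ℝ)/2) := hKm
  have hMv_bounds : ∀ x' ∈ pif,
      T / ((∏ i, x' i : ℕ) : ℝ) ≤ 2 * (Mv x' : ℝ) ∧ (Mv x' : ℝ) ≤ T / ((∏ i, x' i : ℕ) : ℝ) := by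
    intro x' hx'
    obtain ⟨hP1, hPle⟩ := hPfacts x' hx'
    have hPR : (0:ℝ) < ((∏ i, x' i : ℕ) : ℝ) := by exact_mod_cast hP1
    have hTP2 : (2:ℝ) ≤ T / ((∏ i, x' i : ℕ) : ℝ) := by
      calc (2:ℝ) ≤ T ^ ((1:ℝ)/2) := hsqrt2
        _ = T / T ^ ((1:ℝ)/2) := by
            rw [eq_div_iff (by positivity), ← Real.rpow_add hT0]
            norm_num
        _ ≤ T / ((∏ i, x' i : ℕ) : ℝ) := by
            apply div_le_div_of_nonneg_left hT0.le hPR hPle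
    constructor
    · have hfl : T / ((∏ i, x' i : ℕ) : ℝ) - 1 < (Mv x' : ℝ) := Nat.sub_one_lt_floor _
      linarith
    · exact Nat.floor_le (by positivity)
  have hsub : S.image (fun p : (_ : Fin m → ℕ) × ℕ => (Fin.cons p.2 p.1 : Fin (m+1) → ℕ)) ⊆ Gn (m+1) T := by
    intro y hy
    obtain ⟨p, hp, rfl⟩ := Finset.mem_image.1 hy
    obtain ⟨hp1, hp2⟩ := Finset.mem_sigma.1 hp
    obtain ⟨hx11, hx12⟩ := Finset.mem_Icc.1 hp2
    obtain ⟨hP1, hPle⟩ := hPfacts p.1 hp1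
    have hPR : (0:ℝ) < ((∏ i, p.1 i : ℕ) : ℝ) := by exact_mod_cast hP1
    have hP1R : (1:ℝ) ≤ ((∏ i, p.1 i : ℕ) : ℝ) := by exact_mod_cast hP1
    have hdivT : T / ((∏ i, p.1 i : ℕ) : ℝ) ≤ T := by
      rw [div_le_iff₀ hPR]
      nlinarith
    have hMvT : (Mv p.1 : ℝ) ≤ T := le_trans (hMv_bounds p.1 hp1).2 hdivT
    have hprodcons : (∏ i, (Fin.cons p.2 p.1 : Fin (m+1) → ℕ) i) = p.2 * ∏ i, p.1 i := by
      rw [Fin.prod_univ_succ]; simp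
    show Fin.cons p.2 p.1 ∈ Gn (m+1) T
    rw [Gn, Finset.mem_filter]
    constructor
    · rw [Fintype.mem_piFinset]
      intro i
      rw [Finset.mem_Icc]
      refine Fin.cases ?_ ?_ i
      · rw [Fin.cons_zero]
        refine ⟨hx11, ?_⟩
        have : (p.2 : ℝ) ≤ T := le_trans (by exact_mod_cast hx12) hMvT
        exact Nat.le_floor this
      · intro j
        rw [Fin.cons_succ]
        refine ⟨(hpif_mem p.1 hp1 j).1, ?_⟩
        have hKT : (K:ℝ) ≤ T := le_trans hKle
          (le_trans (Real.rpow_le_rpow_of_exponent_le hT1 he1) (Real.rpow_one T).le)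
        have : ((p.1 j : ℕ) : ℝ) ≤ T := le_trans (by exact_mod_cast (hpif_mem p.1 hp1 j).2) hKT
        exact Nat.le_floor this
    · rw [hprodcons, Nat.cast_mul]
      calc (p.2 : ℝ) * ((∏ i, p.1 i : ℕ) : ℝ)
          ≤ (Mv p.1 : ℝ) * ((∏ i, p.1 i : ℕ) : ℝ) := by
            apply mul_le_mul_of_nonneg_right (by exact_mod_cast hx12) hPR.le
        _ ≤ (T / ((∏ i, p.1 i : ℕ) : ℝ)) * ((∏ i, p.1 i : ℕ) : ℝ) := by
            apply mul_le_mul_of_nonneg_right (hMv_bounds p.1 hp1).2 hPR.le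
        _ = T := div_mul_cancel₀ T hPR.ne'
  have hinj : ∀ p ∈ S, ∀ q ∈ S, (fun p : (_ : Fin m → ℕ) × ℕ => (Fin.cons p.2 p.1 : Fin (m+1) → ℕ)) p = (fun p : (_ : Fin m → ℕ) × ℕ => (Fin.cons p.2 p.1 : Fin (m+1) → ℕ)) q
      → p = q := by
    intro p _ q _ h
    obtain ⟨h1, h2⟩ := Fin.cons_inj.1 h
    exact Sigma.ext h2 (heq_of_eq h1)
  have hexp : m + 1 - 1 = m := by omega
  rw [hexp]
  have hlogT : 0 ≤ Real.log T := Real.log_nonneg hT1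
  have hlogK : Real.log T / (224 * m) ≤ Real.log K / 56 := by
    have hK2 : T ^ e / 2 ≤ (K : ℝ) := by
      have h1 : T ^ e - 1 < (K:ℝ) := Nat.sub_one_lt_floor _
      nlinarith
    have hlK : e * Real.log T - Real.log 2 ≤ Real.log K := by
      calc e * Real.log T - Real.log 2 = Real.log (T ^ e / 2) := by
            rw [Real.log_div (by positivity) (by norm_num), Real.log_rpow hT0]
        _ ≤ Real.log K := Real.log_le_log (by positivity) hK2
    have hlogT257 : 2 * (m:ℝ) * Real.log 257 ≤ Real.log T := by
      calc 2 * (m:ℝ) * Real.log 257 = Real.log ((257:ℝ) ^ (2*m : ℕ)) := by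
            rw [Real.log_pow]; push_cast; ring
        _ ≤ Real.log T := Real.log_le_log (by positivity) hT
    have hl4 : Real.log 4 ≤ Real.log 257 := Real.log_le_log (by norm_num) (by norm_num)
    have hl42 : Real.log 4 = 2 * Real.log 2 := by
      rw [show (4:ℝ) = 2^(2:ℕ) by norm_num, Real.log_pow]; push_cast; ring
    have hlog2pos : (0:ℝ) < Real.log 2 := Real.log_pos (by norm_num)
    have hkey : Real.log 2 ≤ Real.log T / (4 * m) := by
      rw [le_div_iff₀ (by positivity)]
      nlinarith
    have heq' : e * Real.log T = 2 * (Real.log T / (4 * m)) := by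
      rw [he]; field_simp; ring
    have h1 : Real.log T / (4 * m) ≤ Real.log K := by linarith
    have heq2 : Real.log T / (4*(m:ℝ)) / 56 = Real.log T / (224 * m) := by
      rw [div_div]; ring_nf
    calc Real.log T / (224 * m) = Real.log T / (4*(m:ℝ)) / 56 := heq2.symm
      _ ≤ Real.log K / 56 := by linarith
  calc 7 / 160 * (1 / (224 * (m:ℝ))) ^ m * T ^ 2 * Real.log T ^ m
      = 7 / 160 * T ^ 2 * (Real.log T / (224 * m)) ^ m := by
        rw [div_pow, div_pow, one_pow]; ring
    _ ≤ 7 / 160 * T ^ 2 * (Real.log K / 56) ^ m := by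
        apply mul_le_mul_of_nonneg_left (pow_le_pow_left₀ (by positivity) hlogK m) (by positivity)
    _ ≤ 7 / 160 * T ^ 2 * (∑ x ∈ Finset.Icc 1 K, (x.totient : ℝ) / (x : ℝ) ^ 2) ^ m := by
        apply mul_le_mul_of_nonneg_left (pow_le_pow_left₀ (by positivity) (L9 K hK256) m)
          (by positivity)
    _ = ∑ x' ∈ pif, 7 / 160 * T ^ 2 * ∏ i, ((x' i).totient : ℝ) / ((x' i : ℕ) : ℝ) ^ 2 := by
        rw [Finset.sum_pow' (Finset.Icc 1 K) (fun x => (x.totient : ℝ) / (x:ℝ)^2) m]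
        rw [Finset.mul_sum]
    _ ≤ ∑ x' ∈ pif, (∑ x1 ∈ Finset.Icc 1 (Mv x'), (x1.totient : ℝ)) * ∏ i, ((x' i).totient : ℝ) := by
        apply Finset.sum_le_sum
        intro x' hx'
        obtain ⟨hP1, hPle⟩ := hPfacts x' hx'
        have hPR : (0:ℝ) < ((∏ i, x' i : ℕ) : ℝ) := by exact_mod_cast hP1
        have hb := hMv_bounds x' hx'
        have hA : (0:ℝ) ≤ ∏ i, ((x' i).totient : ℝ) :=
          Finset.prod_nonneg fun i _ => by positivity
        have hproddiv : (∏ i, ((x' i).totient : ℝ) / ((x' i : ℕ) : ℝ) ^ 2)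
            = (∏ i, ((x' i).totient : ℝ)) / ((∏ i, x' i : ℕ) : ℝ) ^ 2 := by
          rw [Finset.prod_div_distrib]
          congr 1
          push_cast
          rw [Finset.prod_pow]
        rw [hproddiv]
        have h5 := L5 (Mv x')
        have hMv2 : T ^ 2 / (4 * ((∏ i, x' i : ℕ) : ℝ) ^ 2) ≤ (Mv x' : ℝ) ^ 2 := by
          have h1 := hb.1
          have h1' : T ≤ 2 * (Mv x' : ℝ) * ((∏ i, x' i : ℕ) : ℝ) := by
            rw [div_le_iff₀ hPR] at h1; linarith
          have hMv0 : (0:ℝ) ≤ (Mv x' : ℝ) := Nat.cast_nonneg _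
          rw [div_le_iff₀ (by positivity)]
          nlinarith [mul_le_mul h1' h1' hT0.le (by positivity : (0:ℝ) ≤ 2 * (Mv x' : ℝ) * ((∏ i, x' i : ℕ) : ℝ))]
        have hkey2 : 7 / 160 * T ^ 2 / ((∏ i, x' i : ℕ) : ℝ) ^ 2
            ≤ ∑ x1 ∈ Finset.Icc 1 (Mv x'), (x1.totient : ℝ) := by
          calc 7 / 160 * T ^ 2 / ((∏ i, x' i : ℕ) : ℝ) ^ 2
              = 7 / 40 * (T ^ 2 / (4 * ((∏ i, x' i : ℕ) : ℝ) ^ 2)) := by ring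
            _ ≤ 7 / 40 * (Mv x' : ℝ) ^ 2 := by linarith
            _ ≤ _ := h5
        calc 7 / 160 * T ^ 2 * ((∏ i, ((x' i).totient : ℝ)) / ((∏ i, x' i : ℕ) : ℝ) ^ 2)
            = (7 / 160 * T ^ 2 / ((∏ i, x' i : ℕ) : ℝ) ^ 2) * ∏ i, ((x' i).totient : ℝ) := by
              ring
          _ ≤ _ := mul_le_mul_of_nonneg_right hkey2 hA
    _ = ∑ p ∈ S, ∏ i, (((Fin.cons p.2 p.1 : Fin (m+1) → ℕ) i).totient : ℝ) := by
        rw [hS, Finset.sum_sigma]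
        refine Finset.sum_congr rfl fun x' _ => ?_
        rw [Finset.sum_mul]
        refine Finset.sum_congr rfl fun x1 _ => ?_
        simp only [Fin.prod_univ_succ, Fin.cons_zero, Fin.cons_succ]
    _ = ∑ y ∈ S.image (fun p : (_ : Fin m → ℕ) × ℕ => (Fin.cons p.2 p.1 : Fin (m+1) → ℕ)), ∏ i, ((y i).totient : ℝ) := by
        rw [Finset.sum_image hinj]
    _ ≤ ∑ x ∈ Gn (m+1) T, ∏ i, ((x i).totient : ℝ) := by
        apply Finset.sum_le_sum_of_subset_of_nonneg hsub
        intro x _ _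
        exact Finset.prod_nonneg fun i _ => by positivity
end

section
/- For every integer k ≥ 2 and every integer h ≥ 1, the polynomial X^k − hX^{k−1} − X^{k−2} − X^{k−3} − ⋯ − X − 1 is irreducible over ℚ; in particular, for every k ≥ 2 and h ≥ 1 there is at least one irreducible polynomial p(X) ∈ ℤ[X] with deg p = k and H(p) = h. -/
open Polynomial

open Finset
set_option maxHeartbeats 1000000
set_option linter.unusedVariables false


/-- telescoping identity -/
lemma tel2 {R : Type*} [CommRing R] (c : ℕ → R) (z w : R) (n : ℕ) :
    (z - w) * ∑ j ∈ Finset.range (n+1), c j * z^j =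
      c n * z^(n+1) - w * c 0 - ∑ j ∈ Finset.range n, (w * c (j+1) - c j) * z^(j+1) := by
  induction n with
  | zero => simp; ring
  | succ n ih =>
    rw [Finset.sum_range_succ, mul_add, ih, Finset.sum_range_succ]
    ring

lemma multiset_prod_lt_one (s : Multiset ℝ) (h0 : ∀ x ∈ s, 0 ≤ x) (h1 : ∀ x ∈ s, x < 1)
    (hs : s ≠ 0) : s.prod < 1 := by
  induction s using Multiset.induction_on with
  | empty => simp at hs
  | cons a s ih =>
    rcases eq_or_ne s 0 with rfl | hs'
    · simpa using h1 a (by simp)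
    · have ha0 := h0 a (by simp)
      have ha1 := h1 a (by simp)
      have hp := ih (fun x hx => h0 x (by simp [hx])) (fun x hx => h1 x (by simp [hx])) hs'
      have hp0 : 0 ≤ s.prod := Multiset.prod_nonneg (fun x hx => h0 x (by simp [hx]))
      rw [Multiset.prod_cons]
      nlinarith

lemma alpha_exists (m h₀ : ℕ) (hh : 1 ≤ h₀) :
    ∃ α : ℝ, 1 < α ∧ α^(m+2) = h₀ * α^(m+1) + ∑ i ∈ Finset.range (m+1), α^i := by
  set P : ℝ[X] := X^(m+2) - C (h₀:ℝ) * X^(m+1) - ∑ i ∈ Finset.range (m+1), X^i with hP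
  have hdeglt : ((C (h₀:ℝ) * X^(m+1) + ∑ i ∈ Finset.range (m+1), X^i)).degree < ((m+2 : ℕ) : WithBot ℕ) := by
    apply lt_of_le_of_lt (degree_add_le _ _)
    apply max_lt
    · apply lt_of_le_of_lt (degree_mul_le _ _)
      have h1 : (C (h₀:ℝ)).degree ≤ 0 := degree_C_le
      have h2 : (X^(m+1) : ℝ[X]).degree ≤ m+1 := degree_X_pow_le _
      calc (C (h₀:ℝ)).degree + (X^(m+1) : ℝ[X]).degree ≤ 0 + (m+1 : ℕ) := add_le_add h1 h2
      _ = ((m+1 : ℕ) : WithBot ℕ) := by rw [zero_add]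
      _ < ((m+2 : ℕ) : WithBot ℕ) := by exact_mod_cast (by norm_num : ((m:ℕ)+1 : ℕ) < m+2)
    · apply lt_of_le_of_lt (degree_sum_le _ _)
      apply Finset.sup_lt_iff (by exact WithBot.bot_lt_coe _ : (⊥ : WithBot ℕ) < ((m+2:ℕ) : WithBot ℕ)) |>.2
      intro i hi
      calc ((X:ℝ[X])^i).degree ≤ i := degree_X_pow_le _
      _ < ((m+2 : ℕ) : WithBot ℕ) := by
          simp only [Finset.mem_range] at hi
          exact_mod_cast (by omega : i < m+2)
  have hPdeg : P.degree = (m+2 : ℕ) := by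
    rw [hP, sub_sub, degree_sub_eq_left_of_degree_lt]
    · exact degree_X_pow _
    · rwa [degree_X_pow]
  have hlead : P.leadingCoeff = 1 := by
    have : P.Monic := by rw [hP, sub_sub]; exact monic_X_pow_sub hdeglt
    exact this
  have htop : Filter.Tendsto (fun x => P.eval x) Filter.atTop Filter.atTop := by
    apply P.tendsto_atTop_of_leadingCoeff_nonneg
    · rw [hPdeg]; exact_mod_cast (by norm_num : (0:ℕ) < m+2)
    · rw [hlead]; norm_num
  have hex := ((htop.eventually_ge_atTop 0).and (Filter.eventually_ge_atTop (1:ℝ))).exists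
  obtain ⟨M, hM⟩ := hex
  have hc : ContinuousOn (fun x => P.eval x) (Set.Icc 1 M) := (P.continuous_aeval).continuousOn
  have h1 : P.eval 1 < 0 := by
    simp only [hP, eval_sub, eval_pow, eval_X, eval_mul, eval_C, eval_finset_sum, one_pow,
      Finset.sum_const, Finset.card_range, nsmul_eq_mul, mul_one]
    have : (1:ℝ) ≤ h₀ := by exact_mod_cast hh
    push_cast
    nlinarith [this]
  have := intermediate_value_Icc hM.2 hc
  have h0mem : (0:ℝ) ∈ Set.Icc (P.eval 1) (P.eval M) := ⟨h1.le, hM.1⟩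
  obtain ⟨α, hαmem, hα0⟩ := this h0mem
  refine ⟨α, ?_, ?_⟩
  · rcases lt_or_eq_of_le hαmem.1 with h' | h'
    · exact h'
    · exfalso
      have : P.eval α = 0 := hα0
      rw [← h'] at this
      rw [this] at h1; exact lt_irrefl _ h1
  · have : P.eval α = 0 := hα0
    simp only [hP, eval_sub, eval_pow, eval_X, eval_mul, eval_C, eval_finset_sum] at this
    linarith [this]

section core
set_option linter.unusedSectionVars false
variable {m h₀ : ℕ} {α : ℝ}

/-- the coefficients of the cofactor polynomial -/
noncomputable def cc (m : ℕ) (α : ℝ) (j : ℕ) : ℝ :=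
  if j < m+1 then (α^(j+1) - 1)/((α-1) * α^(j+1)) else 1

variable (hα : 1 < α) (hh : 1 ≤ h₀)
  (hroot : α^(m+2) = h₀ * α^(m+1) + ∑ i ∈ Finset.range (m+1), α^i)

include hα

lemma alpha_pos : (0:ℝ) < α := lt_trans one_pos hα

include hh hroot

lemma keyineq : α^(m+1) * (2 - α) < 1 := by
  have hα0 : (0:ℝ) < α := lt_trans one_pos hα
  have hne : α ≠ 1 := ne_of_gt hα
  have hgeom : ∑ i ∈ Finset.range (m+1), α^i = (α^(m+1) - 1)/(α - 1) := geom_sum_eq hne _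
  have hne1 : α - 1 ≠ 0 := by
    intro hc
    have : α = 1 := by linarith
    exact hne this
  have hsum : (α - 1) * ∑ i ∈ Finset.range (m+1), α^i = α^(m+1) - 1 := by
    rw [hgeom, mul_div_cancel₀ _ hne1]
  have h1 : (1:ℝ) ≤ h₀ := by exact_mod_cast hh
  have hp1 : (0:ℝ) < α^(m+1) := pow_pos hα0 _
  have hp2 : α^(m+2) = α^(m+1) * α := by rw [pow_succ]
  -- from hroot: α^(m+2) ≥ α^(m+1) + (α^(m+1)-1)/(α-1)
  have hge : (α-1) * α^(m+2) ≥ (α-1) * α^(m+1) + (α^(m+1) - 1) := by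
    rw [← hsum]
    have : (α-1) * α^(m+2) = (α-1) * ((h₀:ℝ) * α^(m+1)) + (α-1) * ∑ i ∈ Finset.range (m+1), α^i := by
      rw [hroot]; ring
    rw [this]
    have : (α-1) * α^(m+1) ≤ (α-1) * ((h₀:ℝ) * α^(m+1)) := by
      apply mul_le_mul_of_nonneg_left _ (by linarith)
      nlinarith
    linarith
  -- hence α^(m+2) (2-α) ≤ 1
  have hkey2 : α^(m+2) * (2 - α) ≤ 1 := by nlinarith [hge, hp2]
  rcases le_or_gt α 2 with hle | hgt
  · have : α^(m+1) * (2-α) ≤ α^(m+2) * (2-α) := by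
      apply mul_le_mul_of_nonneg_right _ (by linarith)
      rw [hp2]; nlinarith
    rcases eq_or_lt_of_le hle with rfl | hlt2
    · norm_num
    · have hstrict : α^(m+1) * (2-α) < α^(m+2) * (2-α) := by
        apply mul_lt_mul_of_pos_right _ (by linarith)
        rw [hp2]; nlinarith
      linarith
  · have : α^(m+1) * (2-α) < 0 := mul_neg_of_pos_of_neg hp1 (by linarith)
    linarith

lemma cc_pos (j : ℕ) : 0 < cc m α j := by
  unfold cc
  split
  · have h1 : (1:ℝ) < α^(j+1) := one_lt_pow₀ hα (by omega)
    have h2 : (0:ℝ) < α^(j+1) := lt_trans one_pos h1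
    exact div_pos (by linarith) (mul_pos (by linarith) h2)
  · norm_num

lemma cc_mono (j : ℕ) : cc m α j ≤ cc m α (j+1) := by
  have hα0 : (0:ℝ) < α := lt_trans one_pos hα
  have hp : ∀ n : ℕ, (1:ℝ) < α^(n+1) := fun n => one_lt_pow₀ hα (by omega)
  have hpp : ∀ n : ℕ, (0:ℝ) < α^n := fun n => pow_pos hα0 n
  unfold cc
  rcases lt_trichotomy (j+1) (m+1) with hlt | heq | hgt
  · rw [if_pos (by omega), if_pos hlt]
    rw [div_le_div_iff₀ (mul_pos (by linarith) (hpp (j+1))) (mul_pos (by linarith) (hpp (j+1+1)))]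
    rw [pow_succ α (j+1)]
    nlinarith [hpp (j+1), sq_nonneg (α-1), mul_nonneg (hpp (j+1)).le (sq_nonneg (α-1))]
  · -- j = m : cc m ≤ 1 using keyineq
    have hj : j = m := by omega
    subst hj
    rw [if_pos (by omega), if_neg (by omega)]
    have hk := keyineq hα hh hroot
    rw [div_le_one (mul_pos (by linarith) (hpp (j+1)))]
    nlinarith [hpp (j+1)]
  · rw [if_neg (by omega), if_neg (by omega)]

lemma cc_top_lt : cc m α m < 1 := by
  have hα0 : (0:ℝ) < α := lt_trans one_pos hα
  have hpp : (0:ℝ) < α^(m+1) := pow_pos hα0 _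
  have hk := keyineq hα hh hroot
  unfold cc
  rw [if_pos (by omega)]
  rw [div_lt_one (mul_pos (by linarith) hpp)]
  nlinarith

lemma cc_id0 : α * cc m α 0 = 1 := by
  unfold cc
  rw [if_pos (by omega)]
  have hα0 : (0:ℝ) < α := lt_trans one_pos hα
  have h1 : α ≠ 0 := ne_of_gt hα0
  have h2 : α - 1 ≠ 0 := by
    intro hc
    have : α = 1 := by linarith
    exact absurd this (ne_of_gt hα)
  norm_num
  field_simp

lemma cc_idmid (j : ℕ) (hj : j < m) : α * cc m α (j+1) - cc m α j = 1 := by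
  have hα0 : (0:ℝ) < α := lt_trans one_pos hα
  have hpp : ∀ n : ℕ, (0:ℝ) < α^n := fun n => pow_pos hα0 n
  unfold cc
  rw [if_pos (by omega), if_pos (by omega)]
  have e1 : α^(j+1+1) = α^(j+1) * α := by rw [pow_succ]
  have h1 : α^(j+1) ≠ 0 := ne_of_gt (hpp _)
  have h2 : α - 1 ≠ 0 := by
    intro hc
    have : α = 1 := by linarith
    exact absurd this (ne_of_gt hα)
  rw [e1]
  field_simp
  ring

lemma cc_idtop : α * cc m α (m+1) - cc m α m = h₀ := by
  have hα0 : (0:ℝ) < α := lt_trans one_pos hα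
  have hpp : ∀ n : ℕ, (0:ℝ) < α^n := fun n => pow_pos hα0 n
  have hne : α ≠ 1 := ne_of_gt hα
  have hgeom : ∑ i ∈ Finset.range (m+1), α^i = (α^(m+1) - 1)/(α - 1) := geom_sum_eq hne _
  rw [hgeom] at hroot
  unfold cc
  rw [if_neg (by omega), if_pos (by omega)]
  have h1 : α^(m+1) ≠ 0 := ne_of_gt (hpp _)
  have h2 : α - 1 ≠ 0 := by
    intro hc
    have : α = 1 := by linarith
    exact absurd this hne
  have e1 : α^(m+2) = α^(m+1) * α := by rw [pow_succ]
  rw [e1] at hroot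
  field_simp at hroot ⊢
  linear_combination hroot

end core

lemma complex_eq_one {z : ℂ} (h1 : 1 ≤ z.re) (h2 : z.re * z.re + z.im * z.im = 1) : z = 1 := by
  have h3 : z.re = 1 := by nlinarith [sq_nonneg z.im]
  have h4 : z.im = 0 := by nlinarith
  exact Complex.ext h3 (by simp [h4])

section core2
set_option linter.unusedSectionVars false
variable {m h₀ : ℕ} {α : ℝ}
variable (hα : 1 < α) (hh : 1 ≤ h₀)
  (hroot : α^(m+2) = h₀ * α^(m+1) + ∑ i ∈ Finset.range (m+1), α^i)

include hα hh hroot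

lemma fact_poly :
    (X - C α) * ∑ j ∈ Finset.range (m+2), C (cc m α j) * (X:ℝ[X])^j
      = X^(m+2) - C (h₀:ℝ) * X^(m+1) - ∑ i ∈ Finset.range (m+1), (X:ℝ[X])^i := by
  have t := tel2 (fun j => C (cc m α j)) (X : ℝ[X]) (C α) (m+1)
  rw [t]
  have hcc_top : C (cc m α (m+1)) = (1:ℝ[X]) := by
    unfold cc; rw [if_neg (by omega), map_one]
  have h0 : C α * C (cc m α 0) = (1:ℝ[X]) := by rw [← C_mul, cc_id0 hα hh hroot, map_one]
  rw [hcc_top, h0, Finset.sum_range_succ]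
  have hm : (C α * C (cc m α (m+1)) - C (cc m α m)) * (X:ℝ[X])^(m+1)
      = C (h₀:ℝ) * X^(m+1) := by
    rw [← C_mul, ← C_sub, cc_idtop hα hh hroot]
  rw [hm]
  have hsc : ∀ j ∈ Finset.range m,
      (C α * C (cc m α (j+1)) - C (cc m α j)) * (X:ℝ[X])^(j+1) = (X:ℝ[X])^(j+1) := by
    intro j hj
    rw [← C_mul, ← C_sub, cc_idmid hα hh hroot j (Finset.mem_range.1 hj), map_one, one_mul]
  rw [Finset.sum_congr rfl hsc]
  have hs : ∑ i ∈ Finset.range (m+1), (X:ℝ[X])^i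
      = ∑ j ∈ Finset.range m, (X:ℝ[X])^(j+1) + 1 := by
    rw [Finset.sum_range_succ']
    simp
  rw [hs]
  ring

lemma root_small (z : ℂ)
    (hz : ∑ j ∈ Finset.range (m+2), ((cc m α j : ℝ) : ℂ) * z^j = 0) :
    ‖z‖ < 1 := by
  by_contra hcon
  push_neg at hcon
  set r := ‖z‖ with hr
  have hr1 : 1 ≤ r := hcon
  have hr0 : 0 < r := lt_of_lt_of_le one_pos hr1
  have hcc_top : cc m α (m+1) = 1 := by unfold cc; rw [if_neg (by omega)]
  have t := tel2 (fun j => ((cc m α j : ℝ) : ℂ)) z 1 (m+1)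
  rw [hz, mul_zero] at t
  simp only [one_mul] at t
  have heq : z^(m+2) = ((cc m α 0 : ℝ) : ℂ)
      + ∑ j ∈ Finset.range (m+1), (((cc m α (j+1) : ℝ) : ℂ) - ((cc m α j : ℝ):ℂ)) * z^(j+1) := by
    have := t
    rw [hcc_top] at this
    push_cast at this ⊢
    linear_combination -this
  -- weights
  have epos : ∀ j, 0 ≤ cc m α (j+1) - cc m α j := fun j => sub_nonneg.2 (cc_mono hα hh hroot j)
  have ccpos : ∀ j, 0 < cc m α j := cc_pos hα hh hroot
  have esum : cc m α 0 + ∑ j ∈ Finset.range (m+1), (cc m α (j+1) - cc m α j) = 1 := by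
    rw [Finset.sum_range_sub (fun j => cc m α j), hcc_top]; ring
  -- step 1 : r = 1
  have habs : r^(m+2) ≤ r^(m+1) := by
    set S : ℂ := ∑ j ∈ Finset.range (m+1),
      (((cc m α (j+1) : ℝ):ℂ) - ((cc m α j : ℝ):ℂ)) * z^(j+1) with hS
    have h1 : r^(m+2) = ‖(((cc m α 0 : ℝ) : ℂ) + S)‖ := by
      rw [← heq, norm_pow]
    have h2 : ‖(((cc m α 0 : ℝ) : ℂ) + S)‖
        ≤ cc m α 0 + ‖S‖ := by
      have := norm_add_le (((cc m α 0 : ℝ) : ℂ)) S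
      rwa [Complex.norm_real, Real.norm_eq_abs, abs_of_pos (ccpos 0)] at this
    have h3 : ‖S‖ ≤ ∑ j ∈ Finset.range (m+1), (cc m α (j+1) - cc m α j) * r^(j+1) := by
      refine le_trans (norm_sum_le _ _) (le_of_eq ?_)
      apply Finset.sum_congr rfl
      intro j _
      rw [norm_mul, norm_pow, ← Complex.ofReal_sub, Complex.norm_real, Real.norm_eq_abs, abs_of_nonneg (epos j)]
    have h4 : ∑ j ∈ Finset.range (m+1), (cc m α (j+1) - cc m α j) * r^(j+1)
        ≤ ∑ j ∈ Finset.range (m+1), (cc m α (j+1) - cc m α j) * r^(m+1) := by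
      apply Finset.sum_le_sum
      intro j hj
      apply mul_le_mul_of_nonneg_left _ (epos j)
      apply pow_le_pow_right₀ hr1
      simp only [Finset.mem_range] at hj
      omega
    have h5 : cc m α 0 ≤ cc m α 0 * r^(m+1) := by
      nlinarith [ccpos 0, one_le_pow₀ hr1 (n := m+1)]
    have h6 : cc m α 0 * r^(m+1) + ∑ j ∈ Finset.range (m+1), (cc m α (j+1) - cc m α j) * r^(m+1)
        = r^(m+1) := by
      rw [← Finset.sum_mul, ← add_mul, esum, one_mul]
    linarith
  have hre1 : r = 1 := by
    by_contra hne
    have : 1 < r := lt_of_le_of_ne hr1 (Ne.symm hne)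
    have he : r^(m+2) = r^(m+1) * r := pow_succ r (m+1)
    nlinarith [pow_pos hr0 (m+1)]
  -- step 2 : z = 1
  have hnormsq : z * (starRingEnd ℂ) z = 1 := by
    rw [Complex.mul_conj]
    norm_cast
    rw [← Complex.sq_norm, ← hr, hre1]; norm_num
  set w : ℂ := ((starRingEnd ℂ) z)^(m+2) with hw
  have hzw : z^(m+2) * w = 1 := by
    rw [hw, ← mul_pow, hnormsq, one_pow]
  have habs_w : ∀ j : ℕ, ‖(z^(j+1) * w)‖ = 1 := by
    intro j
    rw [norm_mul, norm_pow, norm_pow, Complex.norm_conj, ← hr, hre1]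
    norm_num
  -- real part identity
  have hmain : 1 = cc m α 0 * w.re
      + ∑ j ∈ Finset.range (m+1), (cc m α (j+1) - cc m α j) * (z^(j+1) * w).re := by
    have := congrArg (fun t : ℂ => (t * w).re) heq
    rw [hzw] at this
    rw [Complex.one_re] at this
    rw [this, add_mul, Finset.sum_mul, Complex.add_re, Complex.re_sum]
    congr 1
    · rw [Complex.re_ofReal_mul]
    · apply Finset.sum_congr rfl
      intro j _
      rw [← Complex.ofReal_sub, mul_assoc, Complex.re_ofReal_mul]
  -- bounds
  have habsw : ‖w‖ = 1 := by
    rw [hw, norm_pow, Complex.norm_conj, ← hr, hre1, one_pow]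
  have hb0 : w.re ≤ 1 := by
    have := Complex.re_le_norm w
    rwa [habsw] at this
  have hbj : ∀ j : ℕ, (z^(j+1) * w).re ≤ 1 := by
    intro j
    have := Complex.re_le_norm (z^(j+1) * w)
    rwa [habs_w j] at this
  rw [Finset.sum_range_succ] at hmain
  have hsum_le : ∑ j ∈ Finset.range m, (cc m α (j+1) - cc m α j) * (z^(j+1)*w).re
      ≤ ∑ j ∈ Finset.range m, (cc m α (j+1) - cc m α j) :=
    Finset.sum_le_sum fun j _ => mul_le_of_le_one_right (epos j) (hbj j)
  have hesum' : cc m α 0 + ∑ j ∈ Finset.range m, (cc m α (j+1) - cc m α j)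
      = 1 - (cc m α (m+1) - cc m α m) := by
    rw [Finset.sum_range_succ] at esum
    linarith
  have hem : 0 < cc m α (m+1) - cc m α m := by
    rw [hcc_top]
    have := cc_top_lt hα hh hroot
    linarith
  have hcc0le : cc m α 0 * w.re ≤ cc m α 0 := mul_le_of_le_one_right (ccpos 0).le hb0
  have htm : 1 ≤ (z^(m+1) * w).re := by
    by_contra hlt
    push_neg at hlt
    have hstep : (cc m α (m+1) - cc m α m) * (z^(m+1) * w).re
        < (cc m α (m+1) - cc m α m) * 1 := by
      exact mul_lt_mul_of_pos_left hlt hem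
    linarith [hmain, hsum_le, hesum', hcc0le, hstep]
  have hzm : z^(m+1) * w = (starRingEnd ℂ) z := by
    rw [hw]
    have e : z^(m+1) * ((starRingEnd ℂ) z)^(m+2)
        = (z * (starRingEnd ℂ) z)^(m+1) * (starRingEnd ℂ) z := by ring
    rw [e, hnormsq, one_pow, one_mul]
  have hrez : 1 ≤ z.re := by
    rw [hzm] at htm
    simpa [Complex.conj_re] using htm
  have hsq : z.re * z.re + z.im * z.im = 1 := by
    have h1 := Complex.sq_norm z
    rw [← hr, hre1, Complex.normSq_apply] at h1
    simpa using h1.symm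
  have hz1 : z = 1 := complex_eq_one hrez hsq
  rw [hz1] at hz
  simp only [one_pow, mul_one] at hz
  have hcast : ((∑ j ∈ Finset.range (m+2), cc m α j : ℝ) : ℂ) = 0 := by
    push_cast
    exact hz
  have hzero : ∑ j ∈ Finset.range (m+2), cc m α j = 0 := by exact_mod_cast hcast
  have hpos : 0 < ∑ j ∈ Finset.range (m+2), cc m α j :=
    Finset.sum_pos (fun j _ => ccpos j) (by simp)
  linarith

end core2

lemma abs_multiset_prod (s : Multiset ℂ) :
    ‖s.prod‖ = (s.map (fun x : ℂ => ‖x‖)).prod := by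
  induction s using Multiset.induction_on with
  | empty => simp
  | cons a s ih => simp [norm_mul, ih]

lemma gen_form {R : Type*} [CommRing R] [Nontrivial R] (n : ℕ) (a : R) :
    (X^(n+2) - C a * X^(n+1) - ∑ i ∈ Finset.range (n+1), X^i : R[X]).Monic ∧
    (X^(n+2) - C a * X^(n+1) - ∑ i ∈ Finset.range (n+1), X^i : R[X]).natDegree = n+2 := by
  have hdeglt : ((C a * X^(n+1) + ∑ i ∈ Finset.range (n+1), X^i : R[X])).degree
      < ((n+2 : ℕ) : WithBot ℕ) := by
    apply lt_of_le_of_lt (degree_add_le _ _)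
    apply max_lt
    · apply lt_of_le_of_lt (degree_mul_le _ _)
      have h1 : (C a).degree ≤ 0 := degree_C_le
      have h2 : (X^(n+1) : R[X]).degree ≤ n+1 := degree_X_pow_le _
      calc (C a).degree + (X^(n+1) : R[X]).degree ≤ 0 + (n+1 : ℕ) := add_le_add h1 h2
      _ = ((n+1 : ℕ) : WithBot ℕ) := by rw [zero_add]
      _ < ((n+2 : ℕ) : WithBot ℕ) := by exact_mod_cast (by norm_num : ((n:ℕ)+1 : ℕ) < n+2)
    · apply lt_of_le_of_lt (degree_sum_le _ _)
      apply Finset.sup_lt_iff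
        (by exact WithBot.bot_lt_coe _ : (⊥ : WithBot ℕ) < ((n+2:ℕ) : WithBot ℕ)) |>.2
      intro i hi
      calc ((X:R[X])^i).degree ≤ i := degree_X_pow_le _
      _ < ((n+2 : ℕ) : WithBot ℕ) := by
          simp only [Finset.mem_range] at hi
          exact_mod_cast (by omega : i < n+2)
  have hmon : (X^(n+2) - C a * X^(n+1) - ∑ i ∈ Finset.range (n+1), X^i : R[X]).Monic := by
    rw [sub_sub]; exact monic_X_pow_sub hdeglt
  refine ⟨hmon, ?_⟩
  have hdeg : (X^(n+2) - C a * X^(n+1) - ∑ i ∈ Finset.range (n+1), X^i : R[X]).degree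
      = ((n+2:ℕ) : WithBot ℕ) := by
    rw [sub_sub, degree_sub_eq_left_of_degree_lt]
    · exact degree_X_pow _
    · rwa [degree_X_pow]
  exact natDegree_eq_of_degree_eq_some hdeg

lemma gen_coeff {R : Type*} [CommRing R] (n : ℕ) (a : R) (j : ℕ) :
    (X^(n+2) - C a * X^(n+1) - ∑ i ∈ Finset.range (n+1), X^i : R[X]).coeff j
      = (if j = n+2 then 1 else 0) - (if j = n+1 then a else 0)
        - (if j < n+1 then 1 else 0) := by
  rw [coeff_sub, coeff_sub, coeff_X_pow, coeff_C_mul, coeff_X_pow, finset_sum_coeff]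
  congr 1
  · congr 1
    · rcases eq_or_ne j (n+1) with rfl | hne
      · rw [if_pos rfl, if_pos rfl, mul_one]
      · rw [if_neg hne, if_neg hne, mul_zero]
  · have : ∀ i ∈ Finset.range (n+1), ((X:R[X])^i).coeff j = if i = j then 1 else 0 := by
      intro i _
      rw [coeff_X_pow]
      exact if_congr eq_comm rfl rfl
    rw [Finset.sum_congr rfl this, Finset.sum_ite_eq' (Finset.range (n+1)) j (fun _ => (1:R))]
    simp [Finset.mem_range]

lemma no_factor (m h₀ : ℕ) (α : ℝ) (hα : 1 < α) (hh : 1 ≤ h₀)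
    (hroot : α^(m+2) = h₀ * α^(m+1) + ∑ i ∈ Finset.range (m+1), α^i)
    (P Q : Polynomial ℤ) (hP : P.Monic) (hQ : Q.Monic)
    (hPQ : (X^(m+2) - C (h₀:ℤ) * X^(m+1) - ∑ i ∈ Finset.range (m+1), X^i : Polynomial ℤ) = P * Q)
    (hQdeg : Q.natDegree ≠ 0)
    (hPα : (P.map (Int.castRingHom ℂ)).eval ((α:ℂ)) = 0) : False := by
  set fZ : Polynomial ℤ := X^(m+2) - C (h₀:ℤ) * X^(m+1) - ∑ i ∈ Finset.range (m+1), X^i with hfZ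
  set u : Polynomial ℝ := ∑ j ∈ Finset.range (m+2), C (cc m α j) * X^j with hu
  -- factorization over ℝ
  have hmapR : fZ.map (Int.castRingHom ℝ)
      = X^(m+2) - C (h₀:ℝ) * X^(m+1) - ∑ i ∈ Finset.range (m+1), X^i := by
    rw [hfZ]
    simp only [Polynomial.map_sub, Polynomial.map_pow, Polynomial.map_mul, Polynomial.map_sum,
      map_X, map_C]
    norm_num
  have hfacR : fZ.map (Int.castRingHom ℝ) = (X - C α) * u := by
    rw [hmapR, hu, fact_poly hα hh hroot]
  -- over ℂ
  have hcomp : (algebraMap ℝ ℂ).comp (Int.castRingHom ℝ) = Int.castRingHom ℂ :=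
    RingHom.ext_int _ _
  have hfacC : fZ.map (Int.castRingHom ℂ)
      = (X - C ((α:ℂ))) * u.map (algebraMap ℝ ℂ) := by
    rw [← hcomp, ← Polynomial.map_map, hfacR, Polynomial.map_mul, Polynomial.map_sub, map_X, map_C]
    rfl
  set Uc : Polynomial ℂ := u.map (algebraMap ℝ ℂ) with hUc
  -- roots of Uc are small
  have hUroot : ∀ z : ℂ, Uc.eval z = 0 → ‖z‖ < 1 := by
    intro z hz
    apply root_small hα hh hroot z
    rw [hUc, hu] at hz
    simp only [Polynomial.map_sum, Polynomial.map_mul, Polynomial.map_pow, map_X, map_C,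
      eval_finset_sum, eval_mul, eval_pow, eval_X, eval_C] at hz
    exact hz
  set Pc := P.map (Int.castRingHom ℂ) with hPc
  set Qc := Q.map (Int.castRingHom ℂ) with hQc
  have hPQc : Pc * Qc = (X - C ((α:ℂ))) * Uc := by
    rw [hPc, hQc, ← Polynomial.map_mul, ← hPQ, hfacC]
  -- Q(α) ≠ 0
  have hQα : Qc.eval ((α:ℂ)) ≠ 0 := by
    intro hQ0
    have hd := congrArg derivative hPQc
    rw [derivative_mul, derivative_mul, derivative_sub, derivative_X, derivative_C, sub_zero,
      one_mul] at hd
    have := congrArg (eval ((α:ℂ))) hd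
    simp only [eval_add, eval_mul, eval_sub, eval_X, eval_C, hPα, hQ0, sub_self, zero_mul,
      mul_zero, add_zero, zero_add] at this
    have hUα : Uc.eval ((α:ℂ)) = 0 := by linear_combination -this
    have := hUroot _ hUα
    rw [Complex.norm_real, Real.norm_eq_abs, abs_of_pos (by linarith : (0:ℝ) < α)] at this
    linarith
  -- roots of Qc are small
  have hQsplits : Qc.Splits := IsAlgClosed.splits Qc
  have hQcM : Qc.Monic := hQ.map _
  have hQroots : ∀ z ∈ Qc.roots, ‖z‖ < 1 := by
    intro z hz
    have hzq : Qc.eval z = 0 := by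
      have := Polynomial.isRoot_of_mem_roots hz
      exact this
    have hfz : ((X - C ((α:ℂ))) * Uc).eval z = 0 := by
      rw [← hPQc]
      simp only [eval_mul]
      have : Pc.eval z * Qc.eval z = 0 := by rw [hzq, mul_zero]
      exact this
    rw [eval_mul, eval_sub, eval_X, eval_C] at hfz
    rcases mul_eq_zero.1 hfz with hc | hc
    · exfalso
      have : z = ((α:ℂ)) := by linear_combination hc
      rw [this] at hzq
      exact hQα hzq
    · exact hUroot z hc
  -- coeff 0 of Q is a unit
  have hcoeff0 : fZ.coeff 0 = -1 := by
    rw [hfZ, gen_coeff]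
    norm_num
  have hPQ0 : P.coeff 0 * Q.coeff 0 = -1 := by
    rw [← mul_coeff_zero, ← hPQ, hcoeff0]
  have hQ0unit : Q.coeff 0 = 1 ∨ Q.coeff 0 = -1 := by
    have : IsUnit (Q.coeff 0) := by
      apply isUnit_of_mul_isUnit_right (y := Q.coeff 0) (x := P.coeff 0)
      rw [hPQ0]
      exact IsUnit.neg isUnit_one
    exact Int.isUnit_iff.1 this
  -- contradiction via product of roots
  have hcard : Multiset.card Qc.roots = Q.natDegree := by
    have h1 := hQsplits.natDegree_eq_card_roots
    rw [← h1, hQc]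
    exact (hQ.natDegree_map _)
  have hprod := hQsplits.coeff_zero_eq_prod_roots_of_monic hQcM
  have habs : ‖(Qc.coeff 0)‖ < 1 := by
    rw [hprod]
    rw [norm_mul, norm_pow, norm_neg, norm_one, one_pow, one_mul, abs_multiset_prod]
    apply multiset_prod_lt_one
    · intro x hx
      obtain ⟨z, hz, rfl⟩ := Multiset.mem_map.1 hx
      exact norm_nonneg z
    · intro x hx
      obtain ⟨z, hz, rfl⟩ := Multiset.mem_map.1 hx
      exact hQroots z hz
    · intro hc
      rw [Multiset.map_eq_zero] at hc
      rw [hc] at hcard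
      simp at hcard
      exact hQdeg hcard.symm
  have : ‖(Qc.coeff 0)‖ = 1 := by
    rw [hQc, coeff_map]
    rcases hQ0unit with hq | hq <;> rw [hq] <;> simp
  linarith

lemma irred_fZ (m h₀ : ℕ) (hh : 1 ≤ h₀) :
    Irreducible (X^(m+2) - C (h₀:ℤ) * X^(m+1) - ∑ i ∈ Finset.range (m+1), X^i : Polynomial ℤ) := by
  obtain ⟨α, hα, hroot⟩ := alpha_exists m h₀ hh
  set fZ : Polynomial ℤ := X^(m+2) - C (h₀:ℤ) * X^(m+1) - ∑ i ∈ Finset.range (m+1), X^i with hfZ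
  obtain ⟨hmon, hdeg⟩ := gen_form (R := ℤ) m ((h₀:ℤ))
  have final : ∀ P Q : Polynomial ℤ, P.Monic → Q.Monic → fZ = P * Q →
      ¬ IsUnit P → ¬ IsUnit Q → False := by
    intro P Q hPm hQm hPQ hnP hnQ
    have hPd : P.natDegree ≠ 0 := by
      intro hc
      exact hnP (by rw [(hPm.natDegree_eq_zero).1 hc]; exact isUnit_one)
    have hQd : Q.natDegree ≠ 0 := by
      intro hc
      exact hnQ (by rw [(hQm.natDegree_eq_zero).1 hc]; exact isUnit_one)
    have hr' : ((α:ℂ))^(m+2) = (h₀:ℂ) * ((α:ℂ))^(m+1) + ∑ i ∈ Finset.range (m+1), ((α:ℂ))^i := by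
      have := congrArg (fun t : ℝ => (t : ℂ)) hroot
      push_cast at this ⊢
      exact this
    have hFα : (P.map (Int.castRingHom ℂ)).eval ((α:ℂ))
        * (Q.map (Int.castRingHom ℂ)).eval ((α:ℂ)) = 0 := by
      have h1 : ((P * Q).map (Int.castRingHom ℂ)).eval ((α:ℂ)) = 0 := by
        rw [← hPQ, hfZ]
        simp only [Polynomial.map_sub, Polynomial.map_pow, Polynomial.map_mul,
          Polynomial.map_sum, map_X, map_C, eval_sub, eval_pow, eval_mul, eval_X, eval_C,
          eval_finset_sum, eq_intCast, Polynomial.map_natCast, Polynomial.map_intCast, eval_natCast, eval_intCast]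
        push_cast
        linear_combination hr'
      rw [Polynomial.map_mul, eval_mul] at h1
      exact h1
    rcases mul_eq_zero.1 hFα with hroot' | hroot'
    · exact no_factor m h₀ α hα hh hroot P Q hPm hQm hPQ hQd hroot'
    · exact no_factor m h₀ α hα hh hroot Q P hQm hPm (by rw [← hfZ, hPQ]; ring) hPd hroot'
  constructor
  · intro hunit
    have := (hmon.isUnit_iff).1 hunit
    rw [this] at hdeg
    simp at hdeg
  · intro P Q hPQ
    by_contra hcon
    push_neg at hcon
    obtain ⟨hnP, hnQ⟩ := hcon
    have hlc : P.leadingCoeff * Q.leadingCoeff = 1 := by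
      rw [← leadingCoeff_mul, ← hPQ]
      exact hmon
    rcases Int.mul_eq_one_iff_eq_one_or_neg_one.1 hlc with ⟨h1, h2⟩ | ⟨h1, h2⟩
    · exact final P Q h1 h2 hPQ hnP hnQ
    · have hPm : (-P).Monic := by
        unfold Monic
        rw [leadingCoeff_neg, h1]
        norm_num
      have hQm : (-Q).Monic := by
        unfold Monic
        rw [leadingCoeff_neg, h2]
        norm_num
      exact final (-P) (-Q) hPm hQm (by rw [neg_mul_neg]; exact hPQ)
        (fun hc => hnP (by simpa using hc.neg)) (fun hc => hnQ (by simpa using hc.neg))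

lemma height_fZ (m h₀ : ℕ) (hh : 1 ≤ h₀) :
    polyHeight (X^(m+2) - C (h₀:ℤ) * X^(m+1) - ∑ i ∈ Finset.range (m+1), X^i) = h₀ := by
  set fZ : Polynomial ℤ := X^(m+2) - C (h₀:ℤ) * X^(m+1) - ∑ i ∈ Finset.range (m+1), X^i with hfZ
  have hco : ∀ j, fZ.coeff j = (if j = m+2 then 1 else 0) - (if j = m+1 then (h₀:ℤ) else 0)
      - (if j < m+1 then 1 else 0) := fun j => gen_coeff m ((h₀:ℤ)) j
  unfold polyHeight
  apply le_antisymm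
  · apply Finset.sup_le
    intro j _
    rw [hco j]
    split_ifs <;> simp <;> omega
  · have hmem : m+1 ∈ fZ.support := by
      rw [mem_support_iff, hco (m+1)]
      have : ¬ (m+1 = m+2) := by omega
      have h2 : ¬ (m+1 < m+1) := by omega
      rw [if_neg this, if_pos rfl, if_neg h2]
      simp
      omega
    have hle := Finset.le_sup (f := fun i => (fZ.coeff i).natAbs) hmem
    have : (fZ.coeff (m+1)).natAbs = h₀ := by
      rw [hco (m+1)]
      have h1 : ¬ (m+1 = m+2) := by omega
      have h2 : ¬ (m+1 < m+1) := by omega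
      rw [if_neg h1, if_pos rfl, if_neg h2]
      simp
    simpa only [this] using hle

/-- For every `k ≥ 2` and `h ≥ 1`, the polynomial
`X^k − hX^{k−1} − X^{k−2} − ⋯ − X − 1` is irreducible over `ℚ`;
in particular there is at least one irreducible `p ∈ ℤ[X]` with
`deg p = k` and `H(p) = h`. -/
theorem stmt17 (k : ℕ) (hk : 2 ≤ k) (h : ℕ) (hh : 1 ≤ h) :
    Irreducible
      ((X ^ k - C (h : ℤ) * X ^ (k - 1) -
          ∑ i ∈ Finset.range (k - 1), X ^ i).map (Int.castRingHom ℚ)) ∧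
    ∃ p : Polynomial ℤ, Irreducible (p.map (Int.castRingHom ℚ)) ∧
      p.natDegree = k ∧ polyHeight p = h := by
  obtain ⟨m, rfl⟩ : ∃ m, k = m + 2 := ⟨k - 2, by omega⟩
  have hk1 : m + 2 - 1 = m + 1 := rfl
  rw [hk1]
  obtain ⟨hmon, hdeg⟩ := gen_form (R := ℤ) m ((h:ℤ))
  have hirr := irred_fZ m h hh
  have hmapQ : Irreducible ((X^(m+2) - C (h:ℤ) * X^(m+1)
      - ∑ i ∈ Finset.range (m+1), X^i : Polynomial ℤ).map (Int.castRingHom ℚ)) := by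
    rw [← algebraMap_int_eq]
    exact (hmon.irreducible_iff_irreducible_map_fraction_map (K := ℚ)).1 hirr
  exact ⟨hmapQ, ⟨_, hmapQ, hdeg, height_fZ m h hh⟩⟩
end
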